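/- arXiv:2505.09132 — 8 statements merged into one kernel-verified Lean document; each statement's English description precedes it below -/
import Mathlib

section
/- Let Φ : C → C and Ψ : D → D be endofunctors, C' ⊆ C and D' ⊆ D subcategories, and (L ⊣ R, η, ε) : C ⇄ D an adjunction that restricts to the subcategories (L restricts to C' → D', R restricts to D' → C', and the adjunction restricts accordingly). Let α : Ψ∘L ⇒ L∘Φ (a natural transformation between functors C' → D) be a natural isomorphism, and define β : Φ∘R ⇒ R∘Ψ (on D') by β := RΨε ∘ (α^{-1})‾R, where (α^{-1})‾ : Φ ⇒ RΨL is the adjoint transpose of α^{-1} : L∘Φ ⇒ Ψ∘L. Then (Alg_{L,α} ⊣ Alg_{R,β}) : Alg(Φ)|_{C'} ⇄ Alg(Ψ)|_{D'} is an adjunction whose unit and counit components are the components of η and ε. -/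
/-!
Transposing along `L ⊣ R`, the algebra-morphism square for `η_X` becomes an equation between
maps out of `LΦX`; naturality of `α⁻¹` in `η_X` and the triangle identity `Lη ≫ εL = 𝟙` reduce
it to `α⁻¹ ≫ α = 𝟙`.  Dually, the square for `ε_Y` reduces to `α ≫ α⁻¹ = 𝟙`.  The triangle
identities of the lifted adjunction are those of `L ⊣ R` on carriers.
-/

open CategoryTheory

universe v₁ v₂ u₁ u₂

variable {C : Type u₁} [Category.{v₁} C] {D : Type u₂} [Category.{v₂} D]

/-- The restriction of the category of `Φ`-algebras to the full subcategory given by `P`. -/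
abbrev AlgSub (Φ : C ⥤ C) (P : C → Prop) :=
  ObjectProperty.FullSubcategory (fun A : Endofunctor.Algebra Φ => P A.a)

/-- The lifted functor `Alg_{L,α}` sending `(X, a)` to `(LX, La ∘ α_X)` and `f` to `Lf`. -/
def algMap (Φ : C ⥤ C) (Ψ : D ⥤ D) (P : C → Prop) (Q : D → Prop)
    (L : C ⥤ D) (hL : ∀ X : C, P X → Q (L.obj X))
    (α : ObjectProperty.ι P ⋙ L ⋙ Ψ ⟶ ObjectProperty.ι P ⋙ Φ ⋙ L) :
    AlgSub Φ P ⥤ AlgSub Ψ Q where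
  obj A := ⟨⟨L.obj A.obj.a, α.app ⟨A.obj.a, A.property⟩ ≫ L.map A.obj.str⟩, hL _ A.property⟩
  map {A B} f := ObjectProperty.homMk <|
    { f := L.map (Endofunctor.Algebra.Hom.f f.hom)
      h := by
        have hn := α.naturality (X := ⟨A.obj.a, A.property⟩) (Y := ⟨B.obj.a, B.property⟩)
          (ObjectProperty.homMk (Endofunctor.Algebra.Hom.f f.hom))
        have hf := Endofunctor.Algebra.Hom.h f.hom
        dsimp at hn ⊢
        rw [← Category.assoc, hn, Category.assoc, ← L.map_comp, hf, L.map_comp, Category.assoc] }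
  map_id A := by
    apply ObjectProperty.hom_ext
    apply Endofunctor.Algebra.ext
    show L.map (𝟙 A.obj.a) = 𝟙 (L.obj A.obj.a)
    simp
  map_comp {A B E} f g := by
    apply ObjectProperty.hom_ext
    apply Endofunctor.Algebra.ext
    show L.map (Endofunctor.Algebra.Hom.f f.hom ≫ Endofunctor.Algebra.Hom.f g.hom) =
      L.map (Endofunctor.Algebra.Hom.f f.hom) ≫ L.map (Endofunctor.Algebra.Hom.f g.hom)
    simp

namespace CategoryTheory.Adjunction

variable {Φ : C ⥤ C} {Ψ : D ⥤ D} {P : C → Prop} {Q : D → Prop} {L : C ⥤ D} {R : D ⥤ C}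
  (adj : L ⊣ R) (hL : ∀ X : C, P X → Q (L.obj X)) (hR : ∀ Y : D, Q Y → P (R.obj Y))
  (α : ObjectProperty.ι P ⋙ L ⋙ Ψ ⟶ ObjectProperty.ι P ⋙ Φ ⋙ L) [IsIso α]
  (β : ObjectProperty.ι Q ⋙ R ⋙ Φ ⟶ ObjectProperty.ι Q ⋙ Ψ ⋙ R)

/-- The paper's `β = RΨε ∘ (α⁻¹)‾R`, written as the transpose of `α⁻¹_{RY} ≫ Ψε_Y`. -/
noncomputable def transposedInv (Y : ObjectProperty.FullSubcategory Q) :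
    Φ.obj (R.obj Y.obj) ⟶ R.obj (Ψ.obj Y.obj) :=
  adj.homEquiv _ _ ((inv α).app ⟨R.obj Y.obj, hR _ Y.property⟩ ≫ Ψ.map (adj.counit.app Y.obj))

lemma map_unit_app_comp_str (hβ : ∀ Y, β.app Y = adj.transposedInv hR α Y) (A : AlgSub Φ P) :
    Φ.map (adj.unit.app A.obj.a) ≫
        ((algMap Φ Ψ P Q L hL α ⋙ algMap Ψ Φ Q P R hR β).obj A).obj.str =
      A.obj.str ≫ adj.unit.app A.obj.a := by
  obtain ⟨⟨X, a⟩, hX⟩ := A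
  have hinv : L.map (Φ.map (adj.unit.app X)) ≫ (inv α).app ⟨R.obj (L.obj X), hR _ (hL _ hX)⟩ =
      (inv α).app ⟨X, hX⟩ ≫ Ψ.map (L.map (adj.unit.app X)) :=
    (inv α).naturality (X := ⟨X, hX⟩) (Y := ⟨_, hR _ (hL _ hX)⟩)
      (ObjectProperty.homMk (adj.unit.app X))
  dsimp [algMap]
  rw [hβ, transposedInv, ← Category.assoc, ← adj.homEquiv_naturality_left,
    ← adj.homEquiv_naturality_right, ← adj.unit_naturality, ← adj.homEquiv_unit,
    reassoc_of% hinv]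
  simp [← Ψ.map_comp_assoc]

lemma map_counit_app_comp_str (hβ : ∀ Y, β.app Y = adj.transposedInv hR α Y)
    (B : AlgSub Ψ Q) :
    Ψ.map (adj.counit.app B.obj.a) ≫ B.obj.str =
      ((algMap Ψ Φ Q P R hR β ⋙ algMap Φ Ψ P Q L hL α).obj B).obj.str ≫
        adj.counit.app B.obj.a := by
  obtain ⟨⟨Y, b⟩, hY⟩ := B
  dsimp [algMap]
  rw [hβ, transposedInv, Category.assoc, ← adj.homEquiv_naturality_right, ← adj.homEquiv_counit,
    Equiv.symm_apply_apply]
  simp only [Category.assoc, NatIso.isIso_inv_app, IsIso.hom_inv_id_assoc]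

noncomputable def liftAlgebras (hβ : ∀ Y, β.app Y = adj.transposedInv hR α Y) :
    algMap Φ Ψ P Q L hL α ⊣ algMap Ψ Φ Q P R hR β :=
  mkOfUnitCounit
    { unit :=
        { app := fun A => ObjectProperty.homMk ⟨_, adj.map_unit_app_comp_str hL hR α β hβ A⟩
          naturality := fun _ _ f => ObjectProperty.hom_ext _
            (Endofunctor.Algebra.ext (adj.unit.naturality f.hom.f)) }
      counit :=
        { app := fun B => ObjectProperty.homMk ⟨_, adj.map_counit_app_comp_str hL hR α β hβ B⟩
          naturality := fun _ _ f => ObjectProperty.hom_ext _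
            (Endofunctor.Algebra.ext (adj.counit.naturality f.hom.f)) }
      left_triangle := by ext; simp [algMap]
      right_triangle := by ext; simp [algMap] }

end CategoryTheory.Adjunction

theorem stmt2 (Φ : C ⥤ C) (Ψ : D ⥤ D) (P : C → Prop) (Q : D → Prop)
    (L : C ⥤ D) (R : D ⥤ C) (adj : L ⊣ R)
    (hL : ∀ X : C, P X → Q (L.obj X)) (hR : ∀ Y : D, Q Y → P (R.obj Y))
    (α : ObjectProperty.ι P ⋙ L ⋙ Ψ ⟶ ObjectProperty.ι P ⋙ Φ ⋙ L)
    [IsIso α]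
    (β : ObjectProperty.ι Q ⋙ R ⋙ Φ ⟶ ObjectProperty.ι Q ⋙ Ψ ⋙ R)
    (hβ : ∀ Y : ObjectProperty.FullSubcategory Q,
      β.app Y = adj.unit.app (Φ.obj (R.obj Y.obj)) ≫
        R.map ((inv α).app ⟨R.obj Y.obj, hR _ Y.property⟩) ≫
        R.map (Ψ.map (adj.counit.app Y.obj))) :
    ∃ adj' : algMap Φ Ψ P Q L hL α ⊣ algMap Ψ Φ Q P R hR β,
      (∀ A : AlgSub Φ P,
        Endofunctor.Algebra.Hom.f (adj'.unit.app A).hom = adj.unit.app A.obj.a) ∧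
      (∀ B : AlgSub Ψ Q,
        Endofunctor.Algebra.Hom.f (adj'.counit.app B).hom = adj.counit.app B.obj.a) :=
  ⟨adj.liftAlgebras hL hR α β fun Y => by
      rw [hβ, Adjunction.transposedInv, adj.homEquiv_unit, R.map_comp],
    fun _ => rfl, fun _ => rfl⟩
end

section
/- Let Φ : C → C be an endofunctor and (L ⊣ R, η, ε) : C ⇄ D an adjunction such that Φ and LΦR have initial algebras with carriers μΦ and μ(LΦR). If the initial algebra correspondence for Φ and LΦR holds, then μΦ ≅ R(μ(LΦR)) in C and L(μΦ) ≅ μ(LΦR) in D. -/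
/-!
Initiality gives algebra maps `f : μΦ ⟶ R(μ(LΦR))`, for the `Φ`-algebra `η ≫ R ι` on
`R(μ(LΦR))`, and `g : μ(LΦR) ⟶ L(μΦ)`, for the `LΦR`-algebra on `L(μΦ)` obtained by
transporting `ι_Φ` along the invertible `η_{μΦ}`. The composites `f ≫ R g ≫ η⁻¹` and
`g ≫ f♭`, with `f♭ = L f ≫ ε` the transpose of `f`, are algebra endomorphisms of initial
algebras, hence identities; together with the triangle identities these two equations make
`f` and `f♭` invertible.
-/

open CategoryTheory CategoryTheory.Limits

universe v₁ v₂ u₁ u₂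

variable {C : Type u₁} [Category.{v₁} C] {D : Type u₂} [Category.{v₂} D]

noncomputable section

namespace CategoryTheory.Adjunction

open Endofunctor

variable {L : C ⥤ D} {R : D ⥤ C} (adj : L ⊣ R)

theorem map_transpose_eq_inv_unit_comp {X : C} {Y : D} [IsIso (adj.unit.app X)]
    (f : X ⟶ R.obj Y) : R.map (L.map f ≫ adj.counit.app Y) = inv (adj.unit.app X) ≫ f := by
  rw [IsIso.eq_inv_comp]
  simp

theorem isIso_and_isIso_transpose_of_comp_eq_id {X : C} {Y : D} [IsIso (adj.unit.app X)]
    (f : X ⟶ R.obj Y) (g : Y ⟶ L.obj X)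
    (hf : f ≫ R.map g ≫ inv (adj.unit.app X) = 𝟙 X)
    (hg : g ≫ L.map f ≫ adj.counit.app Y = 𝟙 Y) :
    IsIso f ∧ IsIso (L.map f ≫ adj.counit.app Y) := by
  refine ⟨⟨R.map g ≫ inv (adj.unit.app X), hf, ?_⟩, ⟨g, ?_, hg⟩⟩
  · rw [Category.assoc, ← map_transpose_eq_inv_unit_comp, ← R.map_comp, hg, R.map_id]
  · rw [Category.assoc, ← adj.counit_naturality g, ← adj.inv_map_unit, ← Functor.map_inv,
      ← L.map_comp, ← L.map_comp, hf, L.map_id]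

variable (Φ : C ⥤ C)

abbrev rightAlgebraFunctor : Algebra (R ⋙ Φ ⋙ L) ⥤ Algebra Φ where
  obj B := ⟨R.obj B.a, adj.unit.app (Φ.obj (R.obj B.a)) ≫ R.map B.str⟩
  map g := ⟨R.map g.f, by
    have := g.h
    dsimp at this ⊢
    rw [Category.assoc, ← R.map_comp, ← this]
    simp⟩

abbrev leftAlgebra (A : Algebra Φ) [IsIso (adj.unit.app A.a)] : Algebra (R ⋙ Φ ⋙ L) :=
  ⟨L.obj A.a, L.map (Φ.map (inv (adj.unit.app A.a)) ≫ A.str)⟩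

def invUnitHom (A : Algebra Φ) [IsIso (adj.unit.app A.a)] :
    (adj.rightAlgebraFunctor Φ).obj (adj.leftAlgebra Φ A) ⟶ A where
  f := (inv (adj.unit.app A.a) : R.obj (L.obj A.a) ⟶ A.a)
  h := by
    rw [IsIso.eq_comp_inv]
    exact (adj.unit_naturality _).symm

def leftAlgebraTranspose {A : Algebra Φ} [IsIso (adj.unit.app A.a)] {B : Algebra (R ⋙ Φ ⋙ L)}
    (f : A ⟶ (adj.rightAlgebraFunctor Φ).obj B) : adj.leftAlgebra Φ A ⟶ B where
  f := L.map f.f ≫ adj.counit.app B.a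
  h := by
    show L.map (Φ.map (R.map (L.map f.f ≫ adj.counit.app B.a))) ≫ B.str =
      L.map (Φ.map (inv (adj.unit.app A.a)) ≫ A.str) ≫ L.map f.f ≫ adj.counit.app B.a
    rw [map_transpose_eq_inv_unit_comp, ← L.map_comp_assoc, Category.assoc, ← f.h]
    simp

end CategoryTheory.Adjunction

end

theorem stmt7_general (Φ : C ⥤ C) (L : C ⥤ D) (R : D ⥤ C) (adj : L ⊣ R)
    (ιΦ : Endofunctor.Algebra Φ) (hιΦ : IsInitial ιΦ)
    (ιΨ : Endofunctor.Algebra (R ⋙ Φ ⋙ L)) (hιΨ : IsInitial ιΨ)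
    (corr₁ : ∃ h : IsIso (adj.unit.app ιΦ.a),
      Nonempty (IsInitial (⟨ιΦ, h⟩ : AlgSub Φ (fun X : C => IsIso (adj.unit.app X))))) :
    Nonempty (ιΦ.a ≅ R.obj ιΨ.a) ∧ Nonempty (L.obj ιΦ.a ≅ ιΨ.a) := by
  obtain ⟨_, -⟩ := corr₁
  let f := hιΦ.to ((adj.rightAlgebraFunctor Φ).obj ιΨ)
  let g := hιΨ.to (adj.leftAlgebra Φ ιΦ)
  have hf : f ≫ (adj.rightAlgebraFunctor Φ).map g ≫ adj.invUnitHom Φ ιΦ = 𝟙 ιΦ :=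
    hιΦ.hom_ext _ _
  have hg : g ≫ adj.leftAlgebraTranspose Φ f = 𝟙 ιΨ := hιΨ.hom_ext _ _
  obtain ⟨_, _⟩ := adj.isIso_and_isIso_transpose_of_comp_eq_id f.f g.f
    (congrArg Endofunctor.Algebra.Hom.f hf) (congrArg Endofunctor.Algebra.Hom.f hg)
  exact ⟨⟨asIso f.f⟩, ⟨asIso (L.map f.f ≫ adj.counit.app ιΨ.a)⟩⟩

theorem stmt7 (Φ : C ⥤ C) (L : C ⥤ D) (R : D ⥤ C) (adj : L ⊣ R)
    (ιΦ : Endofunctor.Algebra Φ) (hιΦ : IsInitial ιΦ)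
    (ιΨ : Endofunctor.Algebra (R ⋙ Φ ⋙ L)) (hιΨ : IsInitial ιΨ)
    (corr₁ : ∃ h : IsIso (adj.unit.app ιΦ.a),
      Nonempty (IsInitial (⟨ιΦ, h⟩ : AlgSub Φ (fun X : C => IsIso (adj.unit.app X)))))
    (corr₂ : ∃ h : IsIso (adj.counit.app ιΨ.a),
      Nonempty (IsInitial
        (⟨ιΨ, h⟩ : AlgSub (R ⋙ Φ ⋙ L) (fun Y : D => IsIso (adj.counit.app Y))))) :
    Nonempty (ιΦ.a ≅ R.obj ιΨ.a) ∧ Nonempty (L.obj ιΦ.a ≅ ιΨ.a) :=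
  stmt7_general Φ L R adj ιΦ hιΦ ιΨ hιΨ corr₁
end

section
/- Let Φ : C → C and Ψ : D → D be endofunctors, (L ⊣ R, η, ε) : C ⇄ D an adjunction, ρ : LΦR ⇒ Ψ a natural transformation, and assume D has an initial object and all colimits of chains, and that Ψ has an initial algebra ι_Ψ with carrier μΨ. If (1) ρ_{Ψ^i 0} is an isomorphism for each ordinal i, and (2) the initial chain of Ψ converges (W_Ψ(λ, λ+1) is an isomorphism for some ordinal λ), then Alg_{id,ρ}(ι_Ψ), the LΦR-algebra with carrier μΨ and structure map ι_Ψ ∘ ρ_{μΨ}, is an initial object of Alg(LΦR). -/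
/-!
STATEMENT 11: Let `Φ : C → C` and `Ψ : D → D` be endofunctors, `(L ⊣ R, η, ε) : C ⇄ D` an
adjunction, `ρ : LΦR ⇒ Ψ` a natural transformation, and assume `D` has an initial object and
all colimits of chains, and that `Ψ` has an initial algebra `ι_Ψ` with carrier `μΨ`.
If (1) `ρ_{Ψ^i 0}` is an isomorphism for each ordinal `i`, and (2) the initial chain of `Ψ`
converges (`W_Ψ(λ, λ+1)` is an isomorphism for some ordinal `λ`), then `Alg_{id,ρ}(ι_Ψ)` — the
`LΦR`-algebra with carrier `μΨ` and structure map `ι_Ψ ∘ ρ_{μΨ}` — is an initial object of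
`Alg(LΦR)`.
-/

open CategoryTheory Limits

universe w v₁ v₂ u₁ u₂

variable {C : Type u₁} [Category.{v₁} C] {D : Type u₂} [Category.{v₂} D]

/-- The inclusion of the ordinals below `i` into `Ordinal`. -/
def belowIncl (i : Ordinal.{w}) : {j : Ordinal.{w} // j < i} ⥤ Ordinal.{w} :=
  Monotone.functor (f := fun j => j.1) fun _ _ h => h

/-- The canonical cocone on the restriction of a chain `W` to the ordinals below `i`,
with cocone point `W.obj i`. -/
def chainCocone {E : Type u₂} [Category.{v₂} E] (W : Ordinal.{w} ⥤ E) (i : Ordinal.{w}) :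
    Cocone (belowIncl i ⋙ W) where
  pt := W.obj i
  ι :=
    { app := fun j => W.map (homOfLE j.2.le)
      naturality := fun j k f => by
        dsimp [belowIncl]
        rw [Category.comp_id, ← W.map_comp]
        congr 1 }

/-- Data exhibiting the functor `W : Ord ⥤ E` as the initial chain of an endofunctor `Ξ`. -/
structure InitialChainData {E : Type u₂} [Category.{v₂} E] (Ξ : E ⥤ E)
    (W : Ordinal.{w} ⥤ E) where
  isInitial : IsInitial (W.obj 0)
  succ_obj : ∀ i : Ordinal.{w}, W.obj (Order.succ i) = Ξ.obj (W.obj i)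
  succ_map : ∀ (i j : Ordinal.{w}) (h : i ≤ j),
    W.map (homOfLE (Order.succ_le_succ h)) =
      eqToHom (succ_obj i) ≫ Ξ.map (W.map (homOfLE h)) ≫ eqToHom (succ_obj j).symm
  isColimit : ∀ i : Ordinal.{w}, Order.IsSuccLimit i → IsColimit (chainCocone W i)

/-!
Adámek's argument. Along an initial chain `W` of `Ξ`, for every `Ξ`-algebra `(X, b)` and every
ordinal `i` there is exactly one `g : W i ⟶ X` obeying the recursion `W (j+1) ≅ Ξ (W j) ⟶ Ξ X ⟶ X`
below `i` (transfinite induction; limit stages are colimits). If the chain converges at `λ`,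
these maps out of `W λ` are exactly the algebra morphisms out of `(W λ, W(λ, λ+1)⁻¹)`, which is
therefore initial.

Since `ρ` is invertible along the initial chain of `Ψ`, that chain is, up to isomorphism, also an
initial chain of `LΦR`, converging at the same `λ`. `Alg_{id,ρ}` sends the limit `Ψ`-algebra,
which is isomorphic to `ι_Ψ`, to the limit `LΦR`-algebra, which is initial.
-/

open Order

section

variable {E : Type u₂} [Category.{v₂} E]

lemma map_homOfLE_comp_map_homOfLE {J : Type*} [Preorder J] {W : J ⥤ E} {i j k : J}
    (h : i ≤ j) (h' : j ≤ k) :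
    W.map (homOfLE h) ≫ W.map (homOfLE h') = W.map (homOfLE (h.trans h')) := by
  rw [← W.map_comp, homOfLE_comp]

lemma map_homOfLE_refl {J : Type*} [Preorder J] {W : J ⥤ E} {i : J} (h : i ≤ i) :
    W.map (homOfLE h) = 𝟙 _ :=
  W.map_id i

variable {W : Ordinal.{w} ⥤ E}

lemma hom_ext_of_isColimit_chainCocone {i : Ordinal.{w}} (hi : IsColimit (chainCocone W i))
    {Y : E} {f f' : W.obj i ⟶ Y}
    (h : ∀ k (hk : k < i), W.map (homOfLE hk.le) ≫ f = W.map (homOfLE hk.le) ≫ f') :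
    f = f' :=
  hi.hom_ext fun k => h k.1 k.2

lemma exists_desc_of_isColimit_chainCocone {i : Ordinal.{w}}
    (hi : IsColimit (chainCocone W i)) {Y : E} (f : ∀ k < i, W.obj k ⟶ Y)
    (hf : ∀ j k (hjk : j ≤ k) (hk : k < i),
      W.map (homOfLE hjk) ≫ f k hk = f j (hjk.trans_lt hk)) :
    ∃ g : W.obj i ⟶ Y, ∀ k (hk : k < i), W.map (homOfLE hk.le) ≫ g = f k hk := by
  let s : Cocone (belowIncl i ⋙ W) :=
    { pt := Y
      ι := { app := fun k => f k.1 k.2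
             naturality := fun j k hjk =>
               (hf j k (leOfHom hjk) k.2).trans (Category.comp_id _).symm } }
  exact ⟨hi.desc s, fun k hk => hi.fac s ⟨k, hk⟩⟩

end

/-- An initial chain of `Ξ` in which `W (i+1)` is only isomorphic to `Ξ (W i)`. -/
structure InitialChainUpToIso {E : Type u₂} [Category.{v₂} E] (Ξ : E ⥤ E)
    (W : Ordinal.{w} ⥤ E) where
  isInitial : IsInitial (W.obj 0)
  succIso : ∀ i : Ordinal.{w}, Ξ.obj (W.obj i) ≅ W.obj (succ i)
  succIso_hom_naturality : ∀ (i j : Ordinal.{w}) (h : i ≤ j),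
    (succIso i).hom ≫ W.map (homOfLE (succ_le_succ h)) =
      Ξ.map (W.map (homOfLE h)) ≫ (succIso j).hom
  isColimit : ∀ i : Ordinal.{w}, IsSuccLimit i → IsColimit (chainCocone W i)

def InitialChainData.toInitialChainUpToIso {E : Type u₂} [Category.{v₂} E] {Ξ : E ⥤ E}
    {W : Ordinal.{w} ⥤ E} (hW : InitialChainData Ξ W) : InitialChainUpToIso Ξ W where
  isInitial := hW.isInitial
  succIso i := eqToIso (hW.succ_obj i).symm
  succIso_hom_naturality i j h := by simp [hW.succ_map i j h]
  isColimit := hW.isColimit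

namespace InitialChainUpToIso

variable {E : Type u₂} [Category.{v₂} E] {Ξ : E ⥤ E} {W : Ordinal.{w} ⥤ E}
  (c : InitialChainUpToIso Ξ W)

lemma succIso_inv_naturality {i j : Ordinal.{w}} (h : i ≤ j) :
    W.map (homOfLE (succ_le_succ h)) ≫ (c.succIso j).inv =
      (c.succIso i).inv ≫ Ξ.map (W.map (homOfLE h)) := by
  rw [Iso.comp_inv_eq, Category.assoc, ← c.succIso_hom_naturality, Iso.inv_hom_id_assoc]

variable {X : E} (b : Ξ.obj X ⟶ X)

/-- `g : W i ⟶ X` satisfies the recursion defining the canonical map into `(X, b)` below `i`. -/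
def IsPartialHom (i : Ordinal.{w}) (g : W.obj i ⟶ X) : Prop :=
  ∀ j (h : succ j ≤ i), W.map (homOfLE h) ≫ g =
    (c.succIso j).inv ≫ Ξ.map (W.map (homOfLE ((le_succ j).trans h)) ≫ g) ≫ b

def extend {i : Ordinal.{w}} (g : W.obj i ⟶ X) : W.obj (succ i) ⟶ X :=
  (c.succIso i).inv ≫ Ξ.map g ≫ b

variable {c b}

lemma IsPartialHom.restrict {i k : Ordinal.{w}} {g : W.obj i ⟶ X}
    (hg : c.IsPartialHom b i g) (hk : k ≤ i) :
    c.IsPartialHom b k (W.map (homOfLE hk) ≫ g) := by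
  intro j h
  rw [← Category.assoc, map_homOfLE_comp_map_homOfLE, ← Category.assoc (W.map _),
    map_homOfLE_comp_map_homOfLE]
  exact hg j _

lemma IsPartialHom.eq_extend {k : Ordinal.{w}} {g : W.obj (succ k) ⟶ X}
    (hg : c.IsPartialHom b (succ k) g) :
    g = c.extend b (W.map (homOfLE (le_succ k)) ≫ g) := by
  have := hg k le_rfl
  rwa [map_homOfLE_refl, Category.id_comp] at this

lemma IsPartialHom.eq {i : Ordinal.{w}} {g g' : W.obj i ⟶ X}
    (hg : c.IsPartialHom b i g) (hg' : c.IsPartialHom b i g') : g = g' := by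
  induction i using WellFoundedLT.induction with
  | _ i IH =>
    rcases Ordinal.zero_or_succ_or_isSuccLimit i with rfl | ⟨k, rfl⟩ | hi
    · exact c.isInitial.hom_ext _ _
    · rw [hg.eq_extend, hg'.eq_extend,
        IH k (lt_succ k) (hg.restrict (le_succ k)) (hg'.restrict (le_succ k))]
    · exact hom_ext_of_isColimit_chainCocone (c.isColimit i hi) fun k hk =>
        IH k hk (hg.restrict hk.le) (hg'.restrict hk.le)

lemma IsPartialHom.map_succ_comp_extend {i j : Ordinal.{w}} {g : W.obj i ⟶ X}
    (hg : c.IsPartialHom b i g) (h : succ j ≤ i) :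
    W.map (homOfLE (succ_le_succ ((le_succ j).trans h))) ≫ c.extend b g =
      W.map (homOfLE h) ≫ g := by
  rw [extend, ← Category.assoc, succIso_inv_naturality, hg j h, Category.assoc,
    Functor.map_comp_assoc]

lemma IsPartialHom.map_le_succ_comp_extend {i : Ordinal.{w}} {g : W.obj i ⟶ X}
    (hg : c.IsPartialHom b i g) : W.map (homOfLE (le_succ i)) ≫ c.extend b g = g := by
  rcases Ordinal.zero_or_succ_or_isSuccLimit i with rfl | ⟨k, rfl⟩ | hi
  · exact c.isInitial.hom_ext _ _
  · rw [hg.map_succ_comp_extend le_rfl, map_homOfLE_refl, Category.id_comp]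
  · refine hom_ext_of_isColimit_chainCocone (c.isColimit i hi) fun k hk => ?_
    rw [← Category.assoc, map_homOfLE_comp_map_homOfLE,
      ← map_homOfLE_comp_map_homOfLE (le_succ k) (succ_le_succ hk.le), Category.assoc,
      hg.map_succ_comp_extend (hi.succ_lt hk).le, ← Category.assoc, map_homOfLE_comp_map_homOfLE]

lemma IsPartialHom.extend {i : Ordinal.{w}} {g : W.obj i ⟶ X} (hg : c.IsPartialHom b i g) :
    c.IsPartialHom b (succ i) (c.extend b g) := by
  intro j h
  rcases (succ_le_succ_iff.mp h).lt_or_eq with hj | rfl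
  · have hrestrict : W.map (homOfLE ((le_succ j).trans h)) ≫ c.extend b g =
        W.map (homOfLE hj.le) ≫ g := by
      rw [← map_homOfLE_comp_map_homOfLE hj.le (le_succ i), Category.assoc,
        hg.map_le_succ_comp_extend]
    rw [hrestrict, hg.map_succ_comp_extend (succ_le_of_lt hj), hg j (succ_le_of_lt hj)]
  · rw [map_homOfLE_refl, Category.id_comp, hg.map_le_succ_comp_extend]
    rfl

variable (c b)

lemma exists_isPartialHom (i : Ordinal.{w}) : ∃ g, c.IsPartialHom b i g := by
  induction i using WellFoundedLT.induction with
  | _ i IH =>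
    rcases Ordinal.zero_or_succ_or_isSuccLimit i with rfl | ⟨k, rfl⟩ | hi
    · exact ⟨c.isInitial.to X, fun j h => absurd h (by simp)⟩
    · obtain ⟨g, hg⟩ := IH k (lt_succ k)
      exact ⟨_, hg.extend⟩
    · choose g hg using IH
      obtain ⟨G, hG⟩ := exists_desc_of_isColimit_chainCocone (c.isColimit i hi) g
        fun j k hjk hk => ((hg k hk).restrict hjk).eq (hg j _)
      refine ⟨G, fun j h => ?_⟩
      have hj : j < i := (lt_succ j).trans_le h
      rw [hG (succ j) (hi.succ_lt hj), (hg _ (hi.succ_lt hj)).eq_extend,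
        ((hg _ (hi.succ_lt hj)).restrict (le_succ j)).eq (hg j hj), hG j hj]
      rfl

variable {b} (l : Ordinal.{w}) [IsIso (W.map (homOfLE (le_succ l)))]

noncomputable abbrev limitAlgebra : Endofunctor.Algebra Ξ :=
  ⟨W.obj l, (c.succIso l).hom ≫ inv (W.map (homOfLE (le_succ l)))⟩

variable {c l} in
lemma IsPartialHom.map_comp_eq_limitAlgebra_str_comp {g : W.obj l ⟶ X}
    (hg : c.IsPartialHom b l g) : Ξ.map g ≫ b = (c.limitAlgebra l).str ≫ g := by
  conv_rhs => rw [← hg.map_le_succ_comp_extend]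
  rw [Category.assoc, IsIso.inv_hom_id_assoc, InitialChainUpToIso.extend,
    Iso.hom_inv_id_assoc]

lemma isPartialHom_of_map_comp_eq_limitAlgebra_str_comp {g : W.obj l ⟶ X}
    (hg : Ξ.map g ≫ b = (c.limitAlgebra l).str ≫ g) : c.IsPartialHom b l g := by
  intro j h
  rw [Functor.map_comp_assoc, hg, Category.assoc, ← Category.assoc (Ξ.map _),
    ← c.succIso_hom_naturality, Category.assoc, Iso.inv_hom_id_assoc,
    ← map_homOfLE_comp_map_homOfLE h (le_succ l), Category.assoc, IsIso.hom_inv_id_assoc]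

noncomputable def limitAlgebraIsInitial : IsInitial (c.limitAlgebra l) :=
  IsInitial.ofUniqueHom
    (fun A => ⟨_, (c.exists_isPartialHom A.str l).choose_spec.map_comp_eq_limitAlgebra_str_comp⟩)
    fun A m => Endofunctor.Algebra.Hom.ext <|
      (c.isPartialHom_of_map_comp_eq_limitAlgebra_str_comp l m.h).eq
        (c.exists_isPartialHom A.str l).choose_spec

variable {Ξ' : E ⥤ E} (ρ : Ξ' ⟶ Ξ) [∀ i, IsIso (ρ.app (W.obj i))]

noncomputable def ofNatTrans : InitialChainUpToIso Ξ' W where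
  isInitial := c.isInitial
  succIso i := asIso (ρ.app (W.obj i)) ≪≫ c.succIso i
  succIso_hom_naturality i j h := by
    simp only [Iso.trans_hom, asIso_hom, Category.assoc, NatTrans.naturality_assoc]
    rw [c.succIso_hom_naturality]
  isColimit := c.isColimit

noncomputable def functorOfNatTransObjLimitAlgebraIso :
    (Endofunctor.Algebra.functorOfNatTrans ρ).obj (c.limitAlgebra l) ≅
      (c.ofNatTrans ρ).limitAlgebra l :=
  Endofunctor.Algebra.isoMk (Iso.refl _) <| by
    change Ξ'.map (𝟙 (W.obj l)) ≫ (ρ.app _ ≫ (c.succIso l).hom) ≫ inv (W.map (homOfLE _)) =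
      (ρ.app _ ≫ (c.succIso l).hom ≫ inv (W.map (homOfLE (le_succ l)))) ≫ 𝟙 (W.obj l)
    simp

noncomputable def isInitialFunctorOfNatTransObj {A : Endofunctor.Algebra Ξ} (hA : IsInitial A) :
    IsInitial ((Endofunctor.Algebra.functorOfNatTrans ρ).obj A) :=
  ((c.ofNatTrans ρ).limitAlgebraIsInitial l).ofIso <|
    (c.functorOfNatTransObjLimitAlgebraIso l ρ).symm ≪≫
      (Endofunctor.Algebra.functorOfNatTrans ρ).mapIso
        ((c.limitAlgebraIsInitial l).uniqueUpToIso hA)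

end InitialChainUpToIso

theorem stmt11_general (Φ : C ⥤ C) (Ψ : D ⥤ D) (L : C ⥤ D) (R : D ⥤ C)
    (ρ : (R ⋙ Φ ⋙ L) ⟶ Ψ)
    -- `Ψ` has an initial algebra `ι_Ψ`
    (ιΨ : Endofunctor.Algebra Ψ) (hιΨ : IsInitial ιΨ)
    -- the initial chain of `Ψ`
    (W : Ordinal.{w} ⥤ D) (hW : InitialChainData Ψ W)
    -- (1) `ρ_{Ψ^i 0}` is an isomorphism for each ordinal `i`
    (h₁ : ∀ i : Ordinal.{w}, IsIso (ρ.app (W.obj i)))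
    -- (2) the initial chain of `Ψ` converges
    (h₂ : ∃ l : Ordinal.{w}, IsIso (W.map (homOfLE (Order.le_succ l)))) :
    Nonempty (IsInitial
      (⟨ιΨ.a, ρ.app ιΨ.a ≫ ιΨ.str⟩ : Endofunctor.Algebra (R ⋙ Φ ⋙ L))) := by
  obtain ⟨l, hl⟩ := h₂
  exact ⟨hW.toInitialChainUpToIso.isInitialFunctorOfNatTransObj l ρ hιΨ⟩

theorem stmt11 (Φ : C ⥤ C) (Ψ : D ⥤ D) (L : C ⥤ D) (R : D ⥤ C) (adj : L ⊣ R)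
    (ρ : (R ⋙ Φ ⋙ L) ⟶ Ψ)
    -- `D` has an initial object and all colimits of chains
    [HasInitial D] (hchains : ∀ (J : Type (w + 1)) (_ : LinearOrder J), HasColimitsOfShape J D)
    -- `Ψ` has an initial algebra `ι_Ψ`
    (ιΨ : Endofunctor.Algebra Ψ) (hιΨ : IsInitial ιΨ)
    -- the initial chain of `Ψ`
    (W : Ordinal.{w} ⥤ D) (hW : InitialChainData Ψ W)
    -- (1) `ρ_{Ψ^i 0}` is an isomorphism for each ordinal `i`
    (h₁ : ∀ i : Ordinal.{w}, IsIso (ρ.app (W.obj i)))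
    -- (2) the initial chain of `Ψ` converges
    (h₂ : ∃ l : Ordinal.{w}, IsIso (W.map (homOfLE (Order.le_succ l)))) :
    Nonempty (IsInitial
      (⟨ιΨ.a, ρ.app ιΨ.a ≫ ιΨ.str⟩ : Endofunctor.Algebra (R ⋙ Φ ⋙ L))) :=
  stmt11_general Φ Ψ L R ρ ιΨ hιΨ W hW h₁ h₂
end

section
/- Let I and A be small categories, J₁ and J₂ categories, B₁ and B₂ cocomplete locally small categories, and Φ : I × A → A a functor. Consider (K₁,T₁)- and (K₂,T₂)-extensions Φ_{K₁,T₁} : J₁ × B₁ → B₁ and Φ_{K₂,T₂} : J₂ × B₂ → B₂ of Φ, where K_i : I → J_i and T_i : A → B_i. If there is a fully faithful functor H : J₂ → J₁ and an adjunction L ⊣ R with L : B₁ → B₂ and R : B₂ → B₁ such that L ∘ T₁ = T₂ and K₁ = H ∘ K₂, then L ∘ Φ_{K₁,T₁} ∘ (H × R) ≅ Φ_{K₂,T₂}. -/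
/-!
The 2-square with sides `K₂ × (T₁ ⋙ L)`, `(K₂ ⋙ H) × T₁` and `H × R`, filled by `𝟙 × unit`, is
Guitart exact: full faithfulness of `H` and transposition along `L ⊣ R` identify the comma
category of `K₂ × T₂` over `(j, b)` with that of `K₁ × T₁` over `(H j, R b)`. Hence restricting
along `H × R` turns the pointwise left Kan extension `E₁ ⋙ L` (the left adjoint `L` preserves the
defining colimits) into a pointwise left Kan extension along `K₂ × T₂`, which is unique up to
isomorphism.
-/

open CategoryTheory

namespace CategoryTheory.TwoSquare

section

variable {C C₃ C₄ : Type*} [Category* C] [Category* C₃] [Category* C₄]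
  {L : C ⥤ C₃} {R : C ⥤ C₄} {B : C₃ ⥤ C₄}

lemma guitartExact_of_bijective (w : TwoSquare (𝟭 C) L R B)
    (hw : ∀ c x, Function.Bijective (fun f : L.obj c ⟶ x => w.natTrans.app c ≫ B.map f)) :
    w.GuitartExact := by
  rw [guitartExact_iff_final]
  intro x
  have hobj (g : CostructuredArrow L x) :
      ((w.costructuredArrowRightwards x).obj g).hom = w.natTrans.app g.left ≫ B.map g.hom := rfl
  have : (w.costructuredArrowRightwards x).Faithful :=
    ⟨fun h => CostructuredArrow.hom_ext _ _ (by have h' := congrArg CommaMorphism.left h; exact h')⟩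
  have : (w.costructuredArrowRightwards x).Full := by
    refine ⟨fun {g g'} φ => ⟨CostructuredArrow.homMk φ.left ((hw _ _).1 ?_), rfl⟩⟩
    have hφ := CostructuredArrow.w φ
    rw [hobj, hobj] at hφ
    dsimp only
    rw [B.map_comp]
    exact (w.natTrans.naturality_assoc φ.left _).symm.trans hφ
  have : (w.costructuredArrowRightwards x).EssSurj := by
    refine ⟨fun h => ?_⟩
    obtain ⟨f, hf⟩ := (hw h.left x).2 h.hom
    exact ⟨CostructuredArrow.mk f, ⟨CostructuredArrow.isoMk (Iso.refl _) (by
      show R.map (𝟙 h.left) ≫ h.hom = _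
      rw [R.map_id, Category.id_comp, hobj, ← hf]
      rfl)⟩⟩
  have : (w.costructuredArrowRightwards x).IsEquivalence := {}
  infer_instance

end

variable {I A J₁ J₂ B₁ B₂ : Type*} [Category* I] [Category* A] [Category* J₁] [Category* J₂]
  [Category* B₁] [Category* B₂]
  (K : I ⥤ J₂) (T : A ⥤ B₁) (H : J₂ ⥤ J₁) {L : B₁ ⥤ B₂} {R : B₂ ⥤ B₁} (adj : L ⊣ R)

def prodUnit : TwoSquare (𝟭 (I × A)) (K.prod (T ⋙ L)) ((K ⋙ H).prod T) (H.prod R) :=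
  NatTrans.prod (𝟙 (K ⋙ H)) (Functor.whiskerLeft T adj.unit)

instance guitartExact_prodUnit [H.Full] [H.Faithful] : (prodUnit K T H adj).GuitartExact := by
  refine guitartExact_of_bijective _ fun ⟨i, a⟩ ⟨j, b⟩ => ?_
  have hmap : (fun f : (K.obj i, L.obj (T.obj a)) ⟶ (j, b) =>
      (prodUnit K T H adj).natTrans.app (i, a) ≫ (H.prod R).map f) =
      Prod.map H.map (adj.homEquiv (T.obj a) b) :=
    funext fun f => Prod.ext (Category.id_comp _) (adj.homEquiv_unit _ _ _).symm
  exact hmap ▸ ((Functor.FullyFaithful.ofFullyFaithful H).map_bijective (K.obj i) j).prodMap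
    (adj.homEquiv (T.obj a) b).bijective

end CategoryTheory.TwoSquare

universe u₁ u₂ v₃ u₃ v₄ u₄ v₅ u₅ v₆ u₆

theorem stmt13_general
    {I : Type u₁} [SmallCategory I] {A : Type u₂} [SmallCategory A]
    {J₁ : Type u₃} [Category.{v₃} J₁] {J₂ : Type u₄} [Category.{v₄} J₂]
    {B₁ : Type u₅} [Category.{v₅} B₁]
    {B₂ : Type u₆} [Category.{v₆} B₂]
    (Φ : I × A ⥤ A)
    (K₁ : I ⥤ J₁) (K₂ : I ⥤ J₂) (T₁ : A ⥤ B₁) (T₂ : A ⥤ B₂)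
    -- the `(K₁,T₁)`-extension of `Φ`: a pointwise left Kan extension of `T₁ ∘ Φ` along `K₁ × T₁`
    (E₁ : J₁ × B₁ ⥤ B₁) (u₁ : Φ ⋙ T₁ ⟶ (K₁.prod T₁) ⋙ E₁)
    (hE₁ : (Functor.LeftExtension.mk E₁ u₁).IsPointwiseLeftKanExtension)
    -- the `(K₂,T₂)`-extension of `Φ`: a pointwise left Kan extension of `T₂ ∘ Φ` along `K₂ × T₂`
    (E₂ : J₂ × B₂ ⥤ B₂) (u₂ : Φ ⋙ T₂ ⟶ (K₂.prod T₂) ⋙ E₂)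
    (hE₂ : (Functor.LeftExtension.mk E₂ u₂).IsPointwiseLeftKanExtension)
    -- a fully faithful functor `H` and an adjunction `L ⊣ R` compatible with the data
    (H : J₂ ⥤ J₁) [H.Full] [H.Faithful]
    (L : B₁ ⥤ B₂) (R : B₂ ⥤ B₁) (adj : L ⊣ R)
    (hT : T₁ ⋙ L = T₂) (hK : K₂ ⋙ H = K₁) :
    Nonempty ((H.prod R) ⋙ E₁ ⋙ L ≅ E₂) := by
  subst hT hK
  have := adj.leftAdjoint_preservesColimits
  let E := ((Functor.LeftExtension.postcompose₂ _ _ L).obj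
    (Functor.LeftExtension.mk E₁ u₁)).compTwoSquare (TwoSquare.prodUnit K₂ T₁ H adj)
  have hE : E.IsPointwiseLeftKanExtension := (hE₁.postcompose L).compTwoSquare _
  have : (H.prod R ⋙ E₁ ⋙ L).IsLeftKanExtension E.hom := hE.isLeftKanExtension
  have : E₂.IsLeftKanExtension u₂ := hE₂.isLeftKanExtension
  exact ⟨Functor.leftKanExtensionUnique (H.prod R ⋙ E₁ ⋙ L) E.hom E₂ u₂⟩

theorem stmt13
    {I : Type u₁} [SmallCategory I] {A : Type u₂} [SmallCategory A]
    {J₁ : Type u₃} [Category.{v₃} J₁] {J₂ : Type u₄} [Category.{v₄} J₂]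
    {B₁ : Type u₅} [Category.{v₅} B₁] [Limits.HasColimits B₁]
    {B₂ : Type u₆} [Category.{v₆} B₂] [Limits.HasColimits B₂]
    (Φ : I × A ⥤ A)
    (K₁ : I ⥤ J₁) (K₂ : I ⥤ J₂) (T₁ : A ⥤ B₁) (T₂ : A ⥤ B₂)
    -- the `(K₁,T₁)`-extension of `Φ`: a pointwise left Kan extension of `T₁ ∘ Φ` along `K₁ × T₁`
    (E₁ : J₁ × B₁ ⥤ B₁) (u₁ : Φ ⋙ T₁ ⟶ (K₁.prod T₁) ⋙ E₁)
    (hE₁ : (Functor.LeftExtension.mk E₁ u₁).IsPointwiseLeftKanExtension)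
    -- the `(K₂,T₂)`-extension of `Φ`: a pointwise left Kan extension of `T₂ ∘ Φ` along `K₂ × T₂`
    (E₂ : J₂ × B₂ ⥤ B₂) (u₂ : Φ ⋙ T₂ ⟶ (K₂.prod T₂) ⋙ E₂)
    (hE₂ : (Functor.LeftExtension.mk E₂ u₂).IsPointwiseLeftKanExtension)
    -- a fully faithful functor `H` and an adjunction `L ⊣ R` compatible with the data
    (H : J₂ ⥤ J₁) [H.Full] [H.Faithful]
    (L : B₁ ⥤ B₂) (R : B₂ ⥤ B₁) (adj : L ⊣ R)
    (hT : T₁ ⋙ L = T₂) (hK : K₂ ⋙ H = K₁) :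
    Nonempty ((H.prod R) ⋙ E₁ ⋙ L ≅ E₂) :=
  stmt13_general Φ K₁ K₂ T₁ T₂ E₁ u₁ hE₁ E₂ u₂ hE₂ H L R adj hT hK
end

section
/- Let Φ : C → C be an endofunctor and (L ⊣ R, η, ε) an adjunction with L : D → C and R : C → D, unit η : id_D ⇒ R∘L and counit ε : L∘R ⇒ id_C. Then the functors Coalg_{L, εΦL} (sending a coalgebra (Y, d : Y → (RΦL)Y) with Y ∈ Fix_η(D) to (LY, (εΦL)_Y ∘ Ld)) and Coalg_{R, RΦε^{-1}} (sending a coalgebra (X, c : X → ΦX) with X ∈ Fix_ε(C) to (RX, RΦ(ε_X)^{-1} ∘ Rc)) form an adjoint equivalence Coalg(RΦL)|Fix_η(D) ≃ Coalg(Φ)|Fix_ε(C) with unit and counit given componentwise by η and ε. Moreover, if Φ̇ is a lifting of Φ along p : E → C and an adjunction (L̇ ⊣ Ṙ, η̇, ε̇) : F ⇄ E is a lifting of (L ⊣ R, η, ε) along q : F → D, p, then the corresponding adjoint equivalence Coalg(ṘΦ̇L̇)|Fix_η̇(F) ≃ Coalg(Φ̇)|Fix_ε̇(E) is a lifting of this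 one along Coalg(q), Coalg(p). -/
/-!
STATEMENT 15: Let `Φ : C → C` be an endofunctor and `(L ⊣ R, η, ε)` an adjunction with
`L : D → C` and `R : C → D`, unit `η : id_D ⇒ R∘L` and counit `ε : L∘R ⇒ id_C`.  Then the
functors `Coalg_{L, εΦL}` (sending a coalgebra `(Y, d : Y → (RΦL)Y)` with `Y ∈ Fix_η(D)` to
`(LY, (εΦL)_Y ∘ Ld)`) and `Coalg_{R, RΦε⁻¹}` (sending a coalgebra `(X, c : X → ΦX)` with
`X ∈ Fix_ε(C)` to `(RX, RΦ(ε_X)⁻¹ ∘ Rc)`) form an adjoint equivalence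
`Coalg(RΦL)|Fix_η(D) ≃ Coalg(Φ)|Fix_ε(C)` with unit and counit given componentwise by `η` and
`ε`.  Moreover, if `Φ̇` is a lifting of `Φ` along `p : E → C` and an adjunction
`(L̇ ⊣ Ṙ, η̇, ε̇) : F ⇄ E` is a lifting of `(L ⊣ R, η, ε)` along `q : F → D, p`, then the
corresponding adjoint equivalence `Coalg(ṘΦ̇L̇)|Fix_η̇(F) ≃ Coalg(Φ̇)|Fix_ε̇(E)` is a lifting of
this one along `Coalg(q), Coalg(p)`.
-/

open CategoryTheory CategoryTheory.Limits

universe v₁ v₂ v₃ v₄ u₁ u₂ u₃ u₄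

variable {C : Type u₁} [Category.{v₁} C] {D : Type u₂} [Category.{v₂} D]
  {E : Type u₃} [Category.{v₃} E] {F : Type u₄} [Category.{v₄} F]

/-- The restriction of the category of `Ψ`-coalgebras to the full subcategory given by `Q`. -/
abbrev CoalgSub {D' : Type u₂} [Category.{v₂} D'] (Ψ : D' ⥤ D') (Q : D' → Prop) :=
  ObjectProperty.FullSubcategory (fun Y : Endofunctor.Coalgebra Ψ => Q Y.V)

/-- The lifted functor `Coalg_{L,α}` sending `(Y, d)` to `(LY, α_Y ∘ Ld)` and `f` to `Lf`. -/
def coalgMap {D' : Type u₂} [Category.{v₂} D'] {C' : Type u₁} [Category.{v₁} C']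
    (Ψ : D' ⥤ D') (Φ : C' ⥤ C') (Q : D' → Prop) (P : C' → Prop)
    (L : D' ⥤ C') (hL : ∀ Y : D', Q Y → P (L.obj Y))
    (α : ObjectProperty.ι Q ⋙ Ψ ⋙ L ⟶ ObjectProperty.ι Q ⋙ L ⋙ Φ) :
    CoalgSub Ψ Q ⥤ CoalgSub Φ P where
  obj Y := ⟨⟨L.obj Y.obj.V, L.map Y.obj.str ≫ α.app ⟨Y.obj.V, Y.property⟩⟩, hL _ Y.property⟩
  map {A B} f := InducedCategory.homMk
    { f := L.map (Endofunctor.Coalgebra.Hom.f f.hom)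
      h := by
        have hn := α.naturality (X := ⟨A.obj.V, A.property⟩) (Y := ⟨B.obj.V, B.property⟩)
          (InducedCategory.homMk (Endofunctor.Coalgebra.Hom.f f.hom))
        have hf := Endofunctor.Coalgebra.Hom.h f.hom
        dsimp [InducedCategory.homMk] at hn ⊢
        rw [Category.assoc, ← hn, ← Category.assoc, ← L.map_comp, hf, L.map_comp,
          Category.assoc] }
  map_id A := by
    apply InducedCategory.hom_ext
    apply Endofunctor.Coalgebra.ext
    show L.map (𝟙 A.obj.V) = 𝟙 (L.obj A.obj.V)
    simp
  map_comp {A B E} f g := by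
    apply InducedCategory.hom_ext
    apply Endofunctor.Coalgebra.ext
    show L.map (Endofunctor.Coalgebra.Hom.f f.hom ≫ Endofunctor.Coalgebra.Hom.f g.hom) =
      L.map (Endofunctor.Coalgebra.Hom.f f.hom) ≫ L.map (Endofunctor.Coalgebra.Hom.f g.hom)
    simp

/-- `L` maps `Fix_η` into `Fix_ε`. -/
theorem isIso_counit_app_of_isIso_unit_app {C' : Type u₁} [Category.{v₁} C']
    {D' : Type u₂} [Category.{v₂} D'] {L : C' ⥤ D'} {R : D' ⥤ C'} (adj : L ⊣ R)
    (X : C') (h : IsIso (adj.unit.app X)) : IsIso (adj.counit.app (L.obj X)) := by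
  haveI := h
  haveI : IsIso (L.map (adj.unit.app X) ≫ adj.counit.app (L.obj X)) := by
    rw [adj.left_triangle_components X]; exact IsIso.id _
  exact IsIso.of_isIso_comp_left (L.map (adj.unit.app X)) (adj.counit.app (L.obj X))

/-- `R` maps `Fix_ε` into `Fix_η`. -/
theorem isIso_unit_app_of_isIso_counit_app {C' : Type u₁} [Category.{v₁} C']
    {D' : Type u₂} [Category.{v₂} D'] {L : C' ⥤ D'} {R : D' ⥤ C'} (adj : L ⊣ R)
    (Y : D') (h : IsIso (adj.counit.app Y)) : IsIso (adj.unit.app (R.obj Y)) := by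
  haveI := h
  haveI : IsIso (adj.unit.app (R.obj Y) ≫ R.map (adj.counit.app Y)) := by
    rw [adj.right_triangle_components Y]; exact IsIso.id _
  exact IsIso.of_isIso_comp_right (adj.unit.app (R.obj Y)) (R.map (adj.counit.app Y))

/-!
On `Fix_η` the triangle identity `ε_{LY} ∘ Lη_Y = 1` gives `Lη_Y = ε_{LY}⁻¹`; with the other
triangle identity and naturality of `η` and `ε` this shows that `η_Y` and `ε_X` are morphisms
between the transported coalgebras, so `L ⊣ R` restricts to an adjunction between the coalgebra
categories. Its unit and counit are invertible because a coalgebra morphism is invertible as soon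
as its carrier map is. In the lifted situation every datum of the dotted construction lies over
the undotted one, since `Φ̇`, `L̇`, `Ṙ` and `ε̇` lie over `Φ`, `L`, `R` and `ε`.
-/

open Endofunctor

theorem CategoryTheory.Functor.map_heq_map (G : C ⥤ D) {A A' B B' : C} (hA : A = A')
    (hB : B = B') {f : A ⟶ B} {g : A' ⟶ B'} (h : f ≍ g) : G.map f ≍ G.map g := by
  subst hA hB
  rw [eq_of_heq h]

theorem CategoryTheory.inv_heq_inv {A A' B B' : C} (hA : A = A') (hB : B = B') {f : A ⟶ B}
    {g : A' ⟶ B'} [IsIso f] [IsIso g] (h : f ≍ g) : inv f ≍ inv g := by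
  subst hA hB
  obtain rfl := eq_of_heq h
  rfl

theorem CategoryTheory.isIso_of_heq {A A' B B' : C} (hA : A = A') (hB : B = B') {f : A ⟶ B}
    {g : A' ⟶ B'} (h : f ≍ g) [IsIso f] : IsIso g := by
  subst hA hB
  rwa [← eq_of_heq h]

namespace CoalgSub

variable {Ψ : C ⥤ C} {Q : C → Prop}

theorem hom_ext {A B : CoalgSub Ψ Q} {f g : A ⟶ B} (h : f.hom.f = g.hom.f) : f = g :=
  InducedCategory.hom_ext (Coalgebra.ext h)

theorem ext {A B : CoalgSub Ψ Q} (hV : A.obj.V = B.obj.V) (hstr : A.obj.str ≍ B.obj.str) :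
    A = B := by
  obtain ⟨⟨V, str⟩, hA⟩ := A
  obtain ⟨⟨V', str'⟩, hB⟩ := B
  dsimp only at hV hstr
  subst hV
  rw [eq_of_heq hstr]

theorem hom_heq {A A' B B' : CoalgSub Ψ Q} (hA : A = A') (hB : B = B') {f : A ⟶ B}
    {g : A' ⟶ B'} (h : f.hom.f ≍ g.hom.f) : f ≍ g := by
  subst hA hB
  exact heq_of_eq (hom_ext (eq_of_heq h))

theorem isIso_of_isIso_f {A B : CoalgSub Ψ Q} (f : A ⟶ B) (hf : IsIso f.hom.f) : IsIso f :=
  have : IsIso ((ObjectProperty.ι _ ⋙ Coalgebra.forget Ψ).map f) := hf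
  isIso_of_reflects_iso f (ObjectProperty.ι _ ⋙ Coalgebra.forget Ψ)

end CoalgSub

/-- `Coalg(p)` for a lifting `Φ̇` of `Φ` along `p`, restricted to full subcategories. -/
def coalgProj (p : E ⥤ C) (Φd : E ⥤ E) (Φ : C ⥤ C) (hΦ : Φd ⋙ p = p ⋙ Φ)
    (Pd : E → Prop) (P : C → Prop) (hP : ∀ X : E, Pd X → P (p.obj X)) :
    CoalgSub Φd Pd ⥤ CoalgSub Φ P where
  obj X := ⟨⟨p.obj X.obj.V, p.map X.obj.str ≫ eqToHom (Functor.congr_obj hΦ X.obj.V)⟩,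
    hP _ X.property⟩
  map {A B} f := InducedCategory.homMk
    { f := p.map f.hom.f
      h := by
        calc (p.map A.obj.str ≫ eqToHom _) ≫ Φ.map (p.map f.hom.f)
            = p.map A.obj.str ≫ p.map (Φd.map f.hom.f) ≫
                eqToHom (Functor.congr_obj hΦ B.obj.V) := by
              rw [show p.map (Φd.map f.hom.f) = _ from Functor.congr_hom hΦ f.hom.f]; simp
          _ = p.map f.hom.f ≫ p.map B.obj.str ≫ eqToHom _ := by
              rw [← p.map_comp_assoc, f.hom.h, p.map_comp_assoc] }
  map_id A := CoalgSub.hom_ext (p.map_id A.obj.V)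
  map_comp f g := CoalgSub.hom_ext (p.map_comp f.hom.f g.hom.f)

theorem coalgMap_comp_coalgProj {Ψd : F ⥤ F} {Ψ : D ⥤ D} {Φd : E ⥤ E} {Φ : C ⥤ C}
    {Qd : F → Prop} {Q : D → Prop} {Pd : E → Prop} {P : C → Prop} {Ld : F ⥤ E} {L : D ⥤ C}
    (αd : ObjectProperty.ι Qd ⋙ Ψd ⋙ Ld ⟶ ObjectProperty.ι Qd ⋙ Ld ⋙ Φd)
    (α : ObjectProperty.ι Q ⋙ Ψ ⋙ L ⟶ ObjectProperty.ι Q ⋙ L ⋙ Φ)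
    {q : F ⥤ D} {p : E ⥤ C} (hΨ : Ψd ⋙ q = q ⋙ Ψ) (hΦ : Φd ⋙ p = p ⋙ Φ)
    (hQ : ∀ Y : F, Qd Y → Q (q.obj Y)) (hP : ∀ X : E, Pd X → P (p.obj X))
    (hLp : Ld ⋙ p = q ⋙ L)
    (hLd : ∀ Y : F, Qd Y → Pd (Ld.obj Y)) (hL : ∀ Y : D, Q Y → P (L.obj Y))
    (hα : ∀ Y : ObjectProperty.FullSubcategory Qd,
      p.map (αd.app Y) ≍ α.app ⟨q.obj Y.obj, hQ _ Y.property⟩) :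
    coalgMap Ψd Φd Qd Pd Ld hLd αd ⋙ coalgProj p Φd Φ hΦ Pd P hP =
      coalgProj q Ψd Ψ hΨ Qd Q hQ ⋙ coalgMap Ψ Φ Q P L hL α := by
  have hobj : ∀ Y, (coalgMap Ψd Φd Qd Pd Ld hLd αd ⋙ coalgProj p Φd Φ hΦ Pd P hP).obj Y =
      (coalgProj q Ψd Ψ hΨ Qd Q hQ ⋙ coalgMap Ψ Φ Q P L hL α).obj Y := by
    refine fun Y => CoalgSub.ext (Functor.congr_obj hLp Y.obj.V) ?_
    dsimp [coalgMap, coalgProj]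
    rw [p.map_comp, L.map_comp, eqToHom_map]
    simp only [Category.assoc]
    refine heq_comp (Functor.congr_obj hLp Y.obj.V) (Functor.congr_obj hLp _)
      (congrArg Φ.obj (Functor.congr_obj hLp Y.obj.V)) (Functor.hcongr_hom hLp Y.obj.str) ?_
    simpa only [heq_eqToHom_comp_iff, comp_eqToHom_heq_iff] using hα ⟨Y.obj.V, Y.property⟩
  exact Functor.hext hobj fun A B f =>
    CoalgSub.hom_heq (hobj A) (hobj B) (Functor.hcongr_hom hLp f.hom.f)

section CoalgAdjunction

variable (Φ : C ⥤ C) (L : D ⥤ C) (R : C ⥤ D) (adj : L ⊣ R)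
    (α : ObjectProperty.ι (fun Y : D => IsIso (adj.unit.app Y)) ⋙ (L ⋙ Φ ⋙ R) ⋙ L ⟶
         ObjectProperty.ι (fun Y : D => IsIso (adj.unit.app Y)) ⋙ L ⋙ Φ)
    (hα : ∀ Y : ObjectProperty.FullSubcategory (fun Y : D => IsIso (adj.unit.app Y)),
      α.app Y = adj.counit.app (Φ.obj (L.obj Y.obj)))
    (β : ObjectProperty.ι (fun X : C => IsIso (adj.counit.app X)) ⋙ Φ ⋙ R ⟶
         ObjectProperty.ι (fun X : C => IsIso (adj.counit.app X)) ⋙ R ⋙ (L ⋙ Φ ⋙ R))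
    (hβ : ∀ X : ObjectProperty.FullSubcategory (fun X : C => IsIso (adj.counit.app X)),
      β.app X = R.map (Φ.map (@CategoryTheory.inv _ _ _ _ (adj.counit.app X.obj) X.property)))

def coalgAdjunction :
    coalgMap (L ⋙ Φ ⋙ R) Φ (fun Y : D => IsIso (adj.unit.app Y))
      (fun X : C => IsIso (adj.counit.app X)) L
      (fun Y => isIso_counit_app_of_isIso_unit_app adj Y) α ⊣
    coalgMap Φ (L ⋙ Φ ⋙ R) (fun X : C => IsIso (adj.counit.app X))
      (fun Y : D => IsIso (adj.unit.app Y)) R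
      (fun X => isIso_unit_app_of_isIso_counit_app adj X) β where
  unit :=
    { app := fun Y => InducedCategory.homMk
        { f := adj.unit.app Y.obj.V
          h := by
            have : IsIso (adj.counit.app (L.obj Y.obj.V)) :=
              isIso_counit_app_of_isIso_unit_app adj _ Y.property
            have hLη : L.map (adj.unit.app Y.obj.V) = inv (adj.counit.app (L.obj Y.obj.V)) :=
              IsIso.eq_inv_of_inv_hom_id (adj.left_triangle_components _)
            dsimp [coalgMap]
            rw [hα, hβ, R.map_comp]
            dsimp
            rw [hLη]
            simp only [Category.assoc]
            rw [adj.unit_naturality_assoc, adj.right_triangle_components_assoc] }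
      naturality := fun _ _ f => CoalgSub.hom_ext (adj.unit.naturality f.hom.f) }
  counit :=
    { app := fun X => InducedCategory.homMk
        { f := adj.counit.app X.obj.V
          h := by
            have : IsIso (adj.counit.app X.obj.V) := X.property
            dsimp [coalgMap]
            rw [hα, hβ]
            dsimp
            simp only [Functor.map_comp, Category.assoc]
            rw [adj.counit_naturality_assoc, ← Φ.map_comp,
              IsIso.inv_hom_id, Φ.map_id, Category.comp_id]
            exact adj.counit_naturality X.obj.str }
      naturality := fun _ _ f => CoalgSub.hom_ext (adj.counit.naturality f.hom.f) }
  left_triangle_components Y := CoalgSub.hom_ext (adj.left_triangle_components Y.obj.V)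
  right_triangle_components X := CoalgSub.hom_ext (adj.right_triangle_components X.obj.V)

theorem isIso_coalgAdjunction_unit : IsIso (coalgAdjunction Φ L R adj α hα β hβ).unit := by
  have (Y : CoalgSub (L ⋙ Φ ⋙ R) fun Y : D => IsIso (adj.unit.app Y)) :
      IsIso ((coalgAdjunction Φ L R adj α hα β hβ).unit.app Y) :=
    CoalgSub.isIso_of_isIso_f _ Y.property
  exact NatIso.isIso_of_isIso_app _

theorem isIso_coalgAdjunction_counit : IsIso (coalgAdjunction Φ L R adj α hα β hβ).counit := by
  have (X : CoalgSub Φ fun X : C => IsIso (adj.counit.app X)) :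
      IsIso ((coalgAdjunction Φ L R adj α hα β hβ).counit.app X) :=
    CoalgSub.isIso_of_isIso_f _ X.property
  exact NatIso.isIso_of_isIso_app _

end CoalgAdjunction

theorem CategoryTheory.Functor.comp_comp_eq_of_comp_eq {A₁ A₂ A₃ B₁ B₂ B₃ : Type*}
    [Category A₁] [Category A₂] [Category A₃] [Category B₁] [Category B₂] [Category B₃]
    {p₁ : A₁ ⥤ B₁} {p₂ : A₂ ⥤ B₂} {p₃ : A₃ ⥤ B₃} {Gd : A₁ ⥤ A₂} {Hd : A₂ ⥤ A₃}
    {G : B₁ ⥤ B₂} {H : B₂ ⥤ B₃} (hG : Gd ⋙ p₂ = p₁ ⋙ G) (hH : Hd ⋙ p₃ = p₂ ⋙ H) :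
    (Gd ⋙ Hd) ⋙ p₃ = p₁ ⋙ G ⋙ H := by
  rw [Functor.assoc, hH, ← Functor.assoc, hG, Functor.assoc]

section Lifting

variable {p : E ⥤ C} {q : F ⥤ D} {Φd : E ⥤ E} {Φ : C ⥤ C} {Ld : F ⥤ E} {Rd : E ⥤ F}
  {L : D ⥤ C} {R : C ⥤ D} {adj : L ⊣ R} {adjd : Ld ⊣ Rd}

theorem isIso_unit_app_of_lift (hLp : Ld ⋙ p = q ⋙ L) (hRq : Rd ⋙ q = p ⋙ R)
    (hunit : ∀ Y : F, q.map (adjd.unit.app Y) ≍ adj.unit.app (q.obj Y)) (Y : F)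
    (hY : IsIso (adjd.unit.app Y)) : IsIso (adj.unit.app (q.obj Y)) :=
  isIso_of_heq rfl (Functor.congr_obj (Functor.comp_comp_eq_of_comp_eq hLp hRq) Y) (hunit Y)

theorem isIso_counit_app_of_lift (hLp : Ld ⋙ p = q ⋙ L) (hRq : Rd ⋙ q = p ⋙ R)
    (hcounit : ∀ X : E, p.map (adjd.counit.app X) ≍ adj.counit.app (p.obj X)) (X : E)
    (hX : IsIso (adjd.counit.app X)) : IsIso (adj.counit.app (p.obj X)) :=
  isIso_of_heq (Functor.congr_obj (Functor.comp_comp_eq_of_comp_eq hRq hLp) X) rfl (hcounit X)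

theorem counit_app_obj_lift_heq (hΦ : Φd ⋙ p = p ⋙ Φ) (hLp : Ld ⋙ p = q ⋙ L)
    (hcounit : ∀ X : E, p.map (adjd.counit.app X) ≍ adj.counit.app (p.obj X)) (Y : F) :
    p.map (adjd.counit.app (Φd.obj (Ld.obj Y))) ≍ adj.counit.app (Φ.obj (L.obj (q.obj Y))) :=
  (hcounit _).trans <| congr_arg_heq adj.counit.app <|
    Functor.congr_obj (Functor.comp_comp_eq_of_comp_eq hLp hΦ) Y

theorem map_map_inv_counit_app_lift_heq (hΦ : Φd ⋙ p = p ⋙ Φ) (hLp : Ld ⋙ p = q ⋙ L)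
    (hRq : Rd ⋙ q = p ⋙ R)
    (hcounit : ∀ X : E, p.map (adjd.counit.app X) ≍ adj.counit.app (p.obj X)) (X : E)
    [IsIso (adjd.counit.app X)] [IsIso (adj.counit.app (p.obj X))] :
    q.map (Rd.map (Φd.map (inv (adjd.counit.app X)))) ≍
      R.map (Φ.map (inv (adj.counit.app (p.obj X)))) := by
  have hLRp : p.obj (Ld.obj (Rd.obj X)) = L.obj (R.obj (p.obj X)) :=
    Functor.congr_obj (Functor.comp_comp_eq_of_comp_eq hRq hLp) X
  refine (Functor.hcongr_hom (Functor.comp_comp_eq_of_comp_eq hΦ hRq) _).trans ?_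
  refine (Φ ⋙ R).map_heq_map rfl hLRp ?_
  rw [Functor.map_inv]
  exact inv_heq_inv hLRp rfl (hcounit X)

end Lifting

theorem stmt15
    (Φ : C ⥤ C) (L : D ⥤ C) (R : C ⥤ D) (adj : L ⊣ R)
    -- `α = εΦL` and `β = RΦε⁻¹`
    (α : ObjectProperty.ι (fun Y : D => IsIso (adj.unit.app Y)) ⋙ (L ⋙ Φ ⋙ R) ⋙ L ⟶
         ObjectProperty.ι (fun Y : D => IsIso (adj.unit.app Y)) ⋙ L ⋙ Φ)
    (hα : ∀ Y : ObjectProperty.FullSubcategory (fun Y : D => IsIso (adj.unit.app Y)),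
      α.app Y = adj.counit.app (Φ.obj (L.obj Y.obj)))
    (β : ObjectProperty.ι (fun X : C => IsIso (adj.counit.app X)) ⋙ Φ ⋙ R ⟶
         ObjectProperty.ι (fun X : C => IsIso (adj.counit.app X)) ⋙ R ⋙ (L ⋙ Φ ⋙ R))
    (hβ : ∀ X : ObjectProperty.FullSubcategory (fun X : C => IsIso (adj.counit.app X)),
      β.app X = R.map (Φ.map (@CategoryTheory.inv _ _ _ _ (adj.counit.app X.obj) X.property)))
    -- the lifting data: `Φ̇` lifts `Φ` along `p`, `(L̇ ⊣ Ṙ, η̇, ε̇)` lifts `(L ⊣ R, η, ε)`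
    (p : E ⥤ C) (q : F ⥤ D)
    (Φd : E ⥤ E) (hΦ : Φd ⋙ p = p ⋙ Φ)
    (Ld : F ⥤ E) (Rd : E ⥤ F) (adjd : Ld ⊣ Rd)
    (hLp : Ld ⋙ p = q ⋙ L) (hRq : Rd ⋙ q = p ⋙ R)
    (hunit : ∀ Y : F, HEq (q.map (adjd.unit.app Y)) (adj.unit.app (q.obj Y)))
    (hcounit : ∀ X : E, HEq (p.map (adjd.counit.app X)) (adj.counit.app (p.obj X)))
    -- `α̇ = ε̇Φ̇L̇` and `β̇ = ṘΦ̇ε̇⁻¹`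
    (αd : ObjectProperty.ι (fun Y : F => IsIso (adjd.unit.app Y)) ⋙
            (Ld ⋙ Φd ⋙ Rd) ⋙ Ld ⟶
          ObjectProperty.ι (fun Y : F => IsIso (adjd.unit.app Y)) ⋙ Ld ⋙ Φd)
    (hαd : ∀ Y : ObjectProperty.FullSubcategory (fun Y : F => IsIso (adjd.unit.app Y)),
      αd.app Y = adjd.counit.app (Φd.obj (Ld.obj Y.obj)))
    (βd : ObjectProperty.ι (fun X : E => IsIso (adjd.counit.app X)) ⋙ Φd ⋙ Rd ⟶
          ObjectProperty.ι (fun X : E => IsIso (adjd.counit.app X)) ⋙ Rd ⋙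
            (Ld ⋙ Φd ⋙ Rd))
    (hβd : ∀ X : ObjectProperty.FullSubcategory (fun X : E => IsIso (adjd.counit.app X)),
      βd.app X = Rd.map (Φd.map (@CategoryTheory.inv _ _ _ _ (adjd.counit.app X.obj)
        X.property))) :
    -- the undotted adjoint equivalence `Coalg(RΦL)|Fix_η(D) ≃ Coalg(Φ)|Fix_ε(C)` ...
    ∃ adj' : coalgMap (L ⋙ Φ ⋙ R) Φ (fun Y : D => IsIso (adj.unit.app Y))
               (fun X : C => IsIso (adj.counit.app X)) L
               (fun Y => isIso_counit_app_of_isIso_unit_app adj Y) α ⊣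
             coalgMap Φ (L ⋙ Φ ⋙ R) (fun X : C => IsIso (adj.counit.app X))
               (fun Y : D => IsIso (adj.unit.app Y)) R
               (fun X => isIso_unit_app_of_isIso_counit_app adj X) β,
    -- ... the dotted adjoint equivalence `Coalg(ṘΦ̇L̇)|Fix_η̇(F) ≃ Coalg(Φ̇)|Fix_ε̇(E)` ...
    ∃ adjd' : coalgMap (Ld ⋙ Φd ⋙ Rd) Φd (fun Y : F => IsIso (adjd.unit.app Y))
                (fun X : E => IsIso (adjd.counit.app X)) Ld
                (fun Y => isIso_counit_app_of_isIso_unit_app adjd Y) αd ⊣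
              coalgMap Φd (Ld ⋙ Φd ⋙ Rd) (fun X : E => IsIso (adjd.counit.app X))
                (fun Y : F => IsIso (adjd.unit.app Y)) Rd
                (fun X => isIso_unit_app_of_isIso_counit_app adjd X) βd,
    -- ... and the projection functors `Coalg(p)`, `Coalg(q)` restricted to the subcategories,
    ∃ Coalgp : CoalgSub Φd (fun X : E => IsIso (adjd.counit.app X)) ⥤
                 CoalgSub Φ (fun X : C => IsIso (adj.counit.app X)),
    ∃ Coalgq : CoalgSub (Ld ⋙ Φd ⋙ Rd) (fun Y : F => IsIso (adjd.unit.app Y)) ⥤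
                 CoalgSub (L ⋙ Φ ⋙ R) (fun Y : D => IsIso (adj.unit.app Y)),
      -- both are adjoint equivalences with unit and counit given componentwise by `η` and `ε`
      -- (resp. `η̇` and `ε̇`)
      (∀ Y, Endofunctor.Coalgebra.Hom.f (adj'.unit.app Y).hom = adj.unit.app Y.obj.V) ∧
      (∀ X, Endofunctor.Coalgebra.Hom.f (adj'.counit.app X).hom = adj.counit.app X.obj.V) ∧
      IsIso adj'.unit ∧ IsIso adj'.counit ∧
      (∀ Y, Endofunctor.Coalgebra.Hom.f (adjd'.unit.app Y).hom = adjd.unit.app Y.obj.V) ∧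
      (∀ X, Endofunctor.Coalgebra.Hom.f (adjd'.counit.app X).hom = adjd.counit.app X.obj.V) ∧
      IsIso adjd'.unit ∧ IsIso adjd'.counit ∧
      -- `Coalg(p)` sends a coalgebra `(X, c)` to `(pX, pc)` (and acts as `p` on morphisms),
      -- and similarly `Coalg(q)`
      (∀ X, (Coalgp.obj X).obj.V = p.obj X.obj.V) ∧
      (∀ X, HEq (Coalgp.obj X).obj.str (p.map X.obj.str)) ∧
      (∀ (X X') (f : X ⟶ X'), HEq (Endofunctor.Coalgebra.Hom.f (Coalgp.map f).hom)
        (p.map (Endofunctor.Coalgebra.Hom.f f.hom))) ∧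
      (∀ Y, (Coalgq.obj Y).obj.V = q.obj Y.obj.V) ∧
      (∀ Y, HEq (Coalgq.obj Y).obj.str (q.map Y.obj.str)) ∧
      (∀ (Y Y') (g : Y ⟶ Y'), HEq (Endofunctor.Coalgebra.Hom.f (Coalgq.map g).hom)
        (q.map (Endofunctor.Coalgebra.Hom.f g.hom))) ∧
      -- the dotted equivalence is a lifting of the undotted one along `Coalg(q)`, `Coalg(p)`:
      -- the functors commute with the projections ...
      (coalgMap (Ld ⋙ Φd ⋙ Rd) Φd _ _ Ld
          (fun Y => isIso_counit_app_of_isIso_unit_app adjd Y) αd ⋙ Coalgp =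
        Coalgq ⋙ coalgMap (L ⋙ Φ ⋙ R) Φ _ _ L
          (fun Y => isIso_counit_app_of_isIso_unit_app adj Y) α) ∧
      (coalgMap Φd (Ld ⋙ Φd ⋙ Rd) _ _ Rd
          (fun X => isIso_unit_app_of_isIso_counit_app adjd X) βd ⋙ Coalgq =
        Coalgp ⋙ coalgMap Φ (L ⋙ Φ ⋙ R) _ _ R
          (fun X => isIso_unit_app_of_isIso_counit_app adj X) β) ∧
      -- ... and the unit and counit are liftings of the unit and counit
      (∀ Y, HEq (Coalgq.map (adjd'.unit.app Y)) (adj'.unit.app (Coalgq.obj Y))) ∧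
      (∀ X, HEq (Coalgp.map (adjd'.counit.app X)) (adj'.counit.app (Coalgp.obj X))) := by
  have hΨ : (Ld ⋙ Φd ⋙ Rd) ⋙ q = q ⋙ L ⋙ Φ ⋙ R :=
    Functor.comp_comp_eq_of_comp_eq hLp (Functor.comp_comp_eq_of_comp_eq hΦ hRq)
  have hQ := isIso_unit_app_of_lift hLp hRq hunit
  have hP := isIso_counit_app_of_lift hLp hRq hcounit
  have hLα := coalgMap_comp_coalgProj αd α (P := fun X => IsIso (adj.counit.app X))
    hΨ hΦ hQ hP hLp
    (isIso_counit_app_of_isIso_unit_app adjd) (isIso_counit_app_of_isIso_unit_app adj)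
    fun Y => by
      rw [hαd, hα]
      exact counit_app_obj_lift_heq hΦ hLp hcounit Y.obj
  have hRβ := coalgMap_comp_coalgProj βd β (P := fun Y => IsIso (adj.unit.app Y))
    hΦ hΨ hP hQ hRq
    (isIso_unit_app_of_isIso_counit_app adjd) (isIso_unit_app_of_isIso_counit_app adj)
    fun X => by
      have := X.property
      have := hP _ X.property
      rw [hβd, hβ]
      exact map_map_inv_counit_app_lift_heq hΦ hLp hRq hcounit X.obj
  refine ⟨coalgAdjunction Φ L R adj α hα β hβ, coalgAdjunction Φd Ld Rd adjd αd hαd βd hβd,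
    coalgProj p Φd Φ hΦ _ _ hP, coalgProj q _ _ hΨ _ _ hQ, fun _ => rfl, fun _ => rfl,
    isIso_coalgAdjunction_unit .., isIso_coalgAdjunction_counit .., fun _ => rfl, fun _ => rfl,
    isIso_coalgAdjunction_unit .., isIso_coalgAdjunction_counit .., fun _ => rfl,
    fun _ => comp_eqToHom_heq _ _, fun _ _ _ => HEq.rfl, fun _ => rfl,
    fun _ => comp_eqToHom_heq _ _, fun _ _ _ => HEq.rfl, hLα, hRβ, fun Y => ?_, fun X => ?_⟩
  · exact CoalgSub.hom_heq rfl
      (Functor.congr_obj (Functor.comp_comp_eq_of_comp_eq hLα hRβ) Y) (hunit Y.obj.V)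
  · exact CoalgSub.hom_heq (Functor.congr_obj (Functor.comp_comp_eq_of_comp_eq hRβ hLα) X) rfl
      (hcounit X.obj.V)
end

section
/- Let (P, rew) be a Markov chain over a set S with target ✓, and let Φ and Ψ be the Bellman operators for partial and total expected rewards, with least fixed points μΦ and μΨ. If the Markov chain is almost surely reaching, i.e. π₁((μΦ)(s)) = 1 for every s ∈ S, then π₂ ∘ μΦ = μΨ and (μΦ)(s) = (1, (μΨ)(s)) for every s ∈ S. -/
/-!
Restricted to functions whose probability component is constantly `1`, the partial-reward
operator `Φ` is `(1, Ψ)`: the reward `rew s` is paid once on every outgoing transition, whose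
probabilities sum to one. Hence `(1, μΨ)` is a fixed point of `Φ`, so `μΦ ≤ (1, μΨ)`; and under
almost sure reachability `π₂ ∘ μΦ` is a fixed point of `Ψ`, so `μΨ ≤ π₂ ∘ μΦ`.
-/

open scoped ENNReal

theorem ENNReal.tsum_sum_punit {α : Type*} (f : α ⊕ PUnit → ℝ≥0∞) :
    ∑' x, f x = ∑' a, f (Sum.inl a) + f (Sum.inr PUnit.unit) := by
  rw [ENNReal.summable.tsum_sum ENNReal.summable,
    (hasSum_unique fun i : PUnit => f (Sum.inr i)).tsum_eq]

theorem ENNReal.mul_add_tsum_mul_add_eq {ι : Type*} (p g : ι → ℝ≥0∞) (q r : ℝ≥0∞)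
    (h : ∑' i, p i + q = 1) : r * q + ∑' i, p i * (g i + r) = r + ∑' i, p i * g i :=
  calc r * q + ∑' i, p i * (g i + r) = r * (∑' i, p i + q) + ∑' i, p i * g i := by
        simp only [mul_add, ENNReal.tsum_add, ENNReal.tsum_mul_right]; ring
    _ = r + ∑' i, p i * g i := by rw [h, mul_one]

theorem stmt16_general {S : Type*}
    -- the Markov chain: transition probabilities with finite support summing to one,
    -- and a reward function
    (P : S → S ⊕ PUnit → ℝ≥0∞) (rew : S → ℕ)
    (hsum : ∀ s, ∑' x, P s x = 1)
    -- the Bellman operator for partial expected rewards on `[S, [0,1] × [0,∞]]`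
    (Φ : (S → {p : ℝ≥0∞ // p ≤ 1} × ℝ≥0∞) → (S → {p : ℝ≥0∞ // p ≤ 1} × ℝ≥0∞))
    (hΦ : ∀ k s,
      ((Φ k s).1 : ℝ≥0∞) =
          P s (Sum.inr PUnit.unit) + ∑' s' : S, P s (Sum.inl s') * ((k s').1 : ℝ≥0∞) ∧
      (Φ k s).2 =
          (rew s : ℝ≥0∞) * P s (Sum.inr PUnit.unit) +
            ∑' s' : S, P s (Sum.inl s') * ((k s').2 + (rew s : ℝ≥0∞) * ((k s').1 : ℝ≥0∞)))
    -- the Bellman operator for total expected rewards on `[S, [0,∞]]`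
    (Ψ : (S → ℝ≥0∞) → (S → ℝ≥0∞))
    (hΨ : ∀ k s, Ψ k s = (rew s : ℝ≥0∞) + ∑' s' : S, P s (Sum.inl s') * k s')
    -- the least fixed points
    (μΦ : S → {p : ℝ≥0∞ // p ≤ 1} × ℝ≥0∞)
    (hμΦfix : Φ μΦ = μΦ) (hμΦleast : ∀ k, Φ k = k → μΦ ≤ k)
    (μΨ : S → ℝ≥0∞)
    (hμΨfix : Ψ μΨ = μΨ) (hμΨleast : ∀ k, Ψ k = k → μΨ ≤ k)
    -- almost sure reachability
    (hreach : ∀ s, ((μΦ s).1 : ℝ≥0∞) = 1) :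
    (fun s => (μΦ s).2) = μΨ ∧ ∀ s, μΦ s = (⟨1, le_rfl⟩, μΨ s) := by
  have hstep : ∀ s, ∑' s', P s (Sum.inl s') + P s (Sum.inr PUnit.unit) = 1 := fun s => by
    rw [← ENNReal.tsum_sum_punit, hsum]
  have hΦ_of_reach : ∀ k, (∀ s, ((k s).1 : ℝ≥0∞) = 1) →
      ∀ s, ((Φ k s).1 : ℝ≥0∞) = 1 ∧ (Φ k s).2 = Ψ (fun s => (k s).2) s := by
    intro k hk s
    rw [(hΦ k s).1, (hΦ k s).2, hΨ]
    simp only [hk, mul_one]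
    exact ⟨by rw [add_comm, hstep], ENNReal.mul_add_tsum_mul_add_eq _ _ _ _ (hstep s)⟩
  set k : S → {p : ℝ≥0∞ // p ≤ 1} × ℝ≥0∞ := fun s => (⟨1, le_rfl⟩, μΨ s)
  have hle : μΦ ≤ k := hμΦleast k <| funext fun s => by
    obtain ⟨hprob, hrew⟩ := hΦ_of_reach k (fun _ => rfl) s
    exact Prod.ext (Subtype.ext hprob) (hrew.trans (congrFun hμΨfix s))
  have hge : μΨ ≤ fun s => (μΦ s).2 := hμΨleast _ <| funext fun s => by
    rw [← (hΦ_of_reach μΦ hreach s).2, hμΦfix]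
  have heq : ∀ s, (μΦ s).2 = μΨ s := fun s => le_antisymm (hle s).2 (hge s)
  exact ⟨funext heq, fun s => Prod.ext (Subtype.ext (hreach s)) (heq s)⟩

theorem stmt16 {S : Type*}
    -- the Markov chain: transition probabilities with finite support summing to one,
    -- and a reward function
    (P : S → S ⊕ PUnit → ℝ≥0∞) (rew : S → ℕ)
    (hfin : ∀ s, (Function.support (P s)).Finite)
    (hsum : ∀ s, ∑' x, P s x = 1)
    -- the Bellman operator for partial expected rewards on `[S, [0,1] × [0,∞]]`
    (Φ : (S → {p : ℝ≥0∞ // p ≤ 1} × ℝ≥0∞) → (S → {p : ℝ≥0∞ // p ≤ 1} × ℝ≥0∞))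
    (hΦmono : Monotone Φ)
    (hΦ : ∀ k s,
      ((Φ k s).1 : ℝ≥0∞) =
          P s (Sum.inr PUnit.unit) + ∑' s' : S, P s (Sum.inl s') * ((k s').1 : ℝ≥0∞) ∧
      (Φ k s).2 =
          (rew s : ℝ≥0∞) * P s (Sum.inr PUnit.unit) +
            ∑' s' : S, P s (Sum.inl s') * ((k s').2 + (rew s : ℝ≥0∞) * ((k s').1 : ℝ≥0∞)))
    -- the Bellman operator for total expected rewards on `[S, [0,∞]]`
    (Ψ : (S → ℝ≥0∞) → (S → ℝ≥0∞)) (hΨmono : Monotone Ψ)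
    (hΨ : ∀ k s, Ψ k s = (rew s : ℝ≥0∞) + ∑' s' : S, P s (Sum.inl s') * k s')
    -- the least fixed points
    (μΦ : S → {p : ℝ≥0∞ // p ≤ 1} × ℝ≥0∞)
    (hμΦfix : Φ μΦ = μΦ) (hμΦleast : ∀ k, Φ k = k → μΦ ≤ k)
    (μΨ : S → ℝ≥0∞)
    (hμΨfix : Ψ μΨ = μΨ) (hμΨleast : ∀ k, Ψ k = k → μΨ ≤ k)
    -- almost sure reachability
    (hreach : ∀ s, ((μΦ s).1 : ℝ≥0∞) = 1) :
    (fun s => (μΦ s).2) = μΨ ∧ ∀ s, μΦ s = (⟨1, le_rfl⟩, μΨ s) :=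
  stmt16_general P rew hsum Φ hΦ Ψ hΨ μΦ hμΦfix hμΦleast μΨ hμΨfix hμΨleast hreach
end

section
/- Let c : S → (S ⊕ {✓})^Σ be a deterministic labeled transition system with safe states A ⊆ S, and let Φ_c and Ψ_c be the partial-correctness and total-correctness operators, with least fixed points μΦ_c and μΨ_c. If for every s ∈ S and v ∈ Σ^ω the first component of (μΦ_c)(s,v) equals ⊤ (every path eventually terminates), then (μΦ_c)(s,v) = (⊤, (μΨ_c)(s,v)) for every s ∈ S and v ∈ Σ^ω; in particular π₂ ∘ μΦ_c = μΨ_c. -/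
/-!
Once every path terminates, `π₂` sends the fixed point `μΦ_c` to a fixed point of `Ψ_c`, and
`(⊤, ·)` sends `μΨ_c` to a fixed point of `Φ_c`. Leastness of `μΨ_c` gives `μΨ_c ≤ π₂ ∘ μΦ_c`;
leastness of `μΦ_c` gives `μΦ_c ⊑ (⊤, μΨ_c)`, and since the first components agree (both `⊤`),
the lexicographic order reduces to `π₂ ∘ μΦ_c ≤ μΨ_c`.
-/

/-- The lexicographic order on `2 × 2` (with `Bool` playing the role of `2 = {⊥,⊤}`,
`false = ⊥ < ⊤ = true`). -/
def lexLe (a b : Bool × Bool) : Prop :=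
  a.1 < b.1 ∨ (a.1 = b.1 ∧ a.2 ≤ b.2)

/-- The partial-correctness predicate transformer `Φ_c` on `[S × Σ^ω, (2×2)_l]`. -/
def PhiC {S Γ : Type*} (c : S → Γ → S ⊕ PUnit) (A : S → Bool)
    (k : S × (ℕ → Γ) → Bool × Bool) : S × (ℕ → Γ) → Bool × Bool :=
  fun x =>
    match c x.1 (x.2 0) with
    | Sum.inr _ => (true, A x.1)
    | Sum.inl s' =>
        ((k (s', fun n => x.2 (n + 1))).1,
          !(k (s', fun n => x.2 (n + 1))).1 || (k (s', fun n => x.2 (n + 1))).2)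

/-- The total-correctness predicate transformer `Ψ_c` on `[S × Σ^ω, 2]`. -/
def PsiC {S Γ : Type*} (c : S → Γ → S ⊕ PUnit) (A : S → Bool)
    (k : S × (ℕ → Γ) → Bool) : S × (ℕ → Γ) → Bool :=
  fun x =>
    match c x.1 (x.2 0) with
    | Sum.inr _ => A x.1
    | Sum.inl s' => k (s', fun n => x.2 (n + 1))

theorem lexLe.snd_le_of_fst_eq_true {a b : Bool × Bool} (h : lexLe a b) (ha : a.1 = true) :
    a.2 ≤ b.2 := by
  rcases h with h | ⟨_, h⟩
  · exact absurd (ha ▸ h) not_top_lt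
  · exact h

section Operators

variable {S Γ : Type*} (c : S → Γ → S ⊕ PUnit) (A : S → Bool)

theorem PsiC_snd_eq_snd_PhiC {k : S × (ℕ → Γ) → Bool × Bool} (hk : ∀ x, (k x).1 = true) :
    PsiC c A (fun x => (k x).2) = fun x => (PhiC c A k x).2 := by
  funext ⟨s, v⟩
  simp only [PsiC, PhiC]
  cases c s (v 0) with
  | inr _ => rfl
  | inl s' => simp [hk]

theorem PhiC_true_prod (m : S × (ℕ → Γ) → Bool) :
    PhiC c A (fun x => (true, m x)) = fun x => (true, PsiC c A m x) := by
  funext ⟨s, v⟩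
  simp only [PsiC, PhiC]
  cases c s (v 0) with
  | inr _ => rfl
  | inl s' => simp

end Operators

theorem stmt17 {S Γ : Type*} (c : S → Γ → S ⊕ PUnit) (A : S → Bool)
    -- `μΦ_c` is the least fixed point of `Φ_c` w.r.t. the pointwise lexicographic order
    (μΦ : S × (ℕ → Γ) → Bool × Bool)
    (hμΦfix : PhiC c A μΦ = μΦ)
    (hμΦleast : ∀ k, PhiC c A k = k → ∀ x, lexLe (μΦ x) (k x))
    -- `μΨ_c` is the least fixed point of `Ψ_c` w.r.t. the pointwise order on `Bool`
    (μΨ : S × (ℕ → Γ) → Bool)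
    (hμΨfix : PsiC c A μΨ = μΨ)
    (hμΨleast : ∀ k, PsiC c A k = k → ∀ x, μΨ x ≤ k x)
    -- every path eventually terminates
    (hterm : ∀ (s : S) (v : ℕ → Γ), (μΦ (s, v)).1 = true) :
    (∀ (s : S) (v : ℕ → Γ), μΦ (s, v) = (true, μΨ (s, v))) ∧
    (fun x => (μΦ x).2) = μΨ := by
  have hfst : ∀ x, (μΦ x).1 = true := fun x => hterm x.1 x.2
  have hge : ∀ x, μΨ x ≤ (μΦ x).2 :=
    hμΨleast _ (by rw [PsiC_snd_eq_snd_PhiC c A hfst, hμΦfix])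
  have hle : ∀ x, (μΦ x).2 ≤ μΨ x := fun x =>
    (hμΦleast _ (by rw [PhiC_true_prod, hμΨfix]) x).snd_le_of_fst_eq_true (hfst x)
  have hsnd : (fun x => (μΦ x).2) = μΨ := funext fun x => le_antisymm (hle x) (hge x)
  exact ⟨fun s v => Prod.ext (hterm s v) (congrFun hsnd (s, v)), hsnd⟩
end

section
/- Fix M ∈ ℕ and let c : S → (P(S) × ℕ) ⊕ {✓} be a nondeterministic transition system with resources. Let Φ be the resource-bounded reachability operator on [S, M_⊥] and Ψ the reachability operator on [S, 2], with least fixed points μΦ and μΨ. If μΦ(s) ∈ {⊥, M} for every s ∈ S (every reachable state has a path to ✓ whose accumulated resource is at least M), then for every s ∈ S: μΦ(s) = M if and only if μΨ(s) = ⊤, and μΦ(s) = ⊥ if and only if μΨ(s) = ⊥. -/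
/-!
Write `supp k` for the set of states where `k` is not `⊥`. Since `min M (m + n)` is never `⊥`,
`Φ k s` is `⊥` exactly when no successor of `s` lies in `supp k`, so `supp (Φ k) = Ψ (supp k)`.
Hence `supp μΦ` is a fixed point of `Ψ` and contains `μΨ`. Conversely, cutting `μΦ` down to `⊥`
outside `μΨ` gives a function with values in `{⊥, M}` (this is where `μΦ s ∈ {⊥, M}` enters:
`min M (M + n) = M`), which is again a fixed point of `Φ`; by leastness `μΦ` vanishes outside `μΨ`.
-/

theorem IsLUB.eq_bot_iff_forall {α : Type*} [PartialOrder α] [OrderBot α] {A : Set α} {a : α}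
    (h : IsLUB A a) : a = ⊥ ↔ ∀ x ∈ A, x = ⊥ := by
  simp only [← le_bot_iff, isLUB_le_iff h, mem_upperBounds]

theorem IsLUB.eq_bot_or_eq_of_subset_singleton {α : Type*} [PartialOrder α] [OrderBot α]
    {A : Set α} {a b : α} (h : IsLUB A a) (hA : A ⊆ {b}) : a = ⊥ ∨ a = b := by
  rcases Set.subset_singleton_iff_eq.1 hA with rfl | rfl
  · exact Or.inl (isBot_iff_eq_bot.1 (isLUB_empty_iff.1 h))
  · exact Or.inr (h.unique isLUB_singleton)

section ResourceReachability

variable {S : Type*} {M : ℕ}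

def stepValues (k : S → WithBot (Fin (M + 1))) (X : Set S) (n : ℕ) :
    Set (WithBot (Fin (M + 1))) :=
  {x | ∃ s' ∈ X, ∃ m : Fin (M + 1), k s' = (m : WithBot (Fin (M + 1))) ∧
    x = ((⟨min M (m.1 + n), Nat.lt_succ_of_le (min_le_left _ _)⟩ : Fin (M + 1)) :
      WithBot (Fin (M + 1)))}

def IsResourceReachOp (c : S → (Set S × ℕ) ⊕ PUnit)
    (Φ : (S → WithBot (Fin (M + 1))) → (S → WithBot (Fin (M + 1)))) : Prop :=
  ∀ k s,
    (∀ u : PUnit, c s = Sum.inr u → Φ k s = ((0 : Fin (M + 1)) : WithBot (Fin (M + 1)))) ∧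
    (∀ (X : Set S) (n : ℕ), c s = Sum.inl (X, n) → IsLUB (stepValues k X n) (Φ k s))

def IsReachOp (c : S → (Set S × ℕ) ⊕ PUnit) (Ψ : (S → Prop) → (S → Prop)) : Prop :=
  ∀ k s,
    (∀ u : PUnit, c s = Sum.inr u → (Ψ k s ↔ True)) ∧
    (∀ (X : Set S) (n : ℕ), c s = Sum.inl (X, n) → (Ψ k s ↔ ∃ s' ∈ X, k s'))

theorem IsLUB.stepValues_eq_bot_iff {k : S → WithBot (Fin (M + 1))} {X : Set S} {n : ℕ}
    {a : WithBot (Fin (M + 1))} (h : IsLUB (stepValues k X n) a) :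
    a = ⊥ ↔ ∀ s' ∈ X, k s' = ⊥ := by
  rw [h.eq_bot_iff_forall]
  constructor
  · intro H s' hs'
    cases hm : k s' with
    | bot => rfl
    | coe m => exact absurd (H _ ⟨s', hs', m, hm, rfl⟩) WithBot.coe_ne_bot
  · rintro H x ⟨s', hs', m, hm, rfl⟩
    exact absurd (H s' hs' ▸ hm).symm WithBot.coe_ne_bot

theorem stepValues_subset_last {k : S → WithBot (Fin (M + 1))} (X : Set S) (n : ℕ)
    (hk : ∀ s, k s = ⊥ ∨ k s = (Fin.last M : WithBot (Fin (M + 1)))) :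
    stepValues k X n ⊆ {(Fin.last M : WithBot (Fin (M + 1)))} := by
  rintro x ⟨s', -, m, hm, rfl⟩
  obtain rfl : m = Fin.last M := by
    rcases hk s' with h | h <;> rw [h] at hm
    · exact absurd hm.symm WithBot.coe_ne_bot
    · exact (WithBot.coe_injective hm).symm
  simp [Fin.ext_iff]

variable {c : S → (Set S × ℕ) ⊕ PUnit}
  {Φ : (S → WithBot (Fin (M + 1))) → (S → WithBot (Fin (M + 1)))} {Ψ : (S → Prop) → (S → Prop)}

theorem IsResourceReachOp.support_eq (hΦ : IsResourceReachOp c Φ) (hΨ : IsReachOp c Ψ)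
    (k : S → WithBot (Fin (M + 1))) :
    (fun s => Φ k s ≠ ⊥) = Ψ (fun s => k s ≠ ⊥) := by
  funext s
  apply propext
  rcases hc : c s with ⟨X, n⟩ | u
  · rw [(hΨ _ s).2 X n hc, Ne, ((hΦ k s).2 X n hc).stepValues_eq_bot_iff]
    push Not
    rfl
  · simp [(hΦ k s).1 u hc, (hΨ _ s).1 u hc]

theorem IsResourceReachOp.restrict_isFixedPt (hΦ : IsResourceReachOp c Φ) (hΨ : IsReachOp c Ψ)
    {μΦ : S → WithBot (Fin (M + 1))} {μΨ : S → Prop} [DecidablePred μΨ] (hμΦ : Φ μΦ = μΦ) (hμΨ : Ψ μΨ = μΨ)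
    (hsupp : ∀ s, μΨ s → μΦ s ≠ ⊥)
    (hgrc : ∀ s, μΦ s = ⊥ ∨ μΦ s = (Fin.last M : WithBot (Fin (M + 1)))) :
    Φ (fun s => if μΨ s then μΦ s else ⊥) = fun s => if μΨ s then μΦ s else ⊥ := by
  set k : S → WithBot (Fin (M + 1)) := fun s => if μΨ s then μΦ s else ⊥
  have hk_supp : (fun s => k s ≠ ⊥) = μΨ := by
    funext s
    by_cases hs : μΨ s <;> simp [k, hs, hsupp s]
  have hΦk_supp : ∀ s, Φ k s ≠ ⊥ ↔ μΨ s := fun s => by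
    rw [← hμΨ, ← hk_supp, ← hΦ.support_eq hΨ]
  funext s
  by_cases hs : μΨ s
  · simp only [k, if_pos hs]
    rcases hc : c s with ⟨X, n⟩ | u
    · have hk : ∀ s', k s' = ⊥ ∨ k s' = (Fin.last M : WithBot (Fin (M + 1))) := fun s' => by
        by_cases h : μΨ s' <;> simp [k, h, hgrc s']
      rcases ((hΦ k s).2 X n hc).eq_bot_or_eq_of_subset_singleton (stepValues_subset_last X n hk)
        with h | h
      · exact absurd h ((hΦk_supp s).2 hs)
      · rw [h, (hgrc s).resolve_left (hsupp s hs)]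
    · rw [(hΦ k s).1 u hc, ← (hΦ μΦ s).1 u hc, hμΦ]
  · simp only [k, if_neg hs]
    exact not_not.1 (mt (hΦk_supp s).1 hs)

end ResourceReachability

theorem stmt18 {S : Type*} (M : ℕ) (c : S → (Set S × ℕ) ⊕ PUnit)
    -- the resource-bounded reachability operator `Φ` on `[S, M_⊥]`
    (Φ : (S → WithBot (Fin (M + 1))) → (S → WithBot (Fin (M + 1))))
    (hΦ : ∀ k s,
      (∀ u : PUnit, c s = Sum.inr u → Φ k s = ((0 : Fin (M + 1)) : WithBot (Fin (M + 1)))) ∧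
      (∀ (X : Set S) (n : ℕ), c s = Sum.inl (X, n) →
        IsLUB {x : WithBot (Fin (M + 1)) |
            ∃ s' ∈ X, ∃ m : Fin (M + 1), k s' = (m : WithBot (Fin (M + 1))) ∧
              x = ((⟨min M (m.1 + n), Nat.lt_succ_of_le (min_le_left _ _)⟩ : Fin (M + 1)) :
                    WithBot (Fin (M + 1)))}
          (Φ k s)))
    -- the reachability operator `Ψ` on `[S, 2]`
    (Ψ : (S → Prop) → (S → Prop))
    (hΨ : ∀ k s,
      (∀ u : PUnit, c s = Sum.inr u → (Ψ k s ↔ True)) ∧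
      (∀ (X : Set S) (n : ℕ), c s = Sum.inl (X, n) → (Ψ k s ↔ ∃ s' ∈ X, k s')))
    -- the least fixed points
    (μΦ : S → WithBot (Fin (M + 1)))
    (hμΦfix : Φ μΦ = μΦ) (hμΦleast : ∀ k, Φ k = k → μΦ ≤ k)
    (μΨ : S → Prop)
    (hμΨfix : Ψ μΨ = μΨ) (hμΨleast : ∀ k, Ψ k = k → μΨ ≤ k)
    -- every reachable state can reach `✓` accumulating at least `M` resources
    (hgrc : ∀ s, μΦ s = ⊥ ∨ μΦ s = ((Fin.last M : Fin (M + 1)) : WithBot (Fin (M + 1)))) :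
    ∀ s, ((μΦ s = ((Fin.last M : Fin (M + 1)) : WithBot (Fin (M + 1)))) ↔ μΨ s) ∧
      ((μΦ s = ⊥) ↔ ¬ μΨ s) := by
  classical
  have hΦ' : IsResourceReachOp c Φ := hΦ
  have hsupp : ∀ s, μΨ s → μΦ s ≠ ⊥ :=
    hμΨleast _ (by rw [← hΦ'.support_eq hΨ, hμΦfix])
  have hbot : ∀ s, ¬ μΨ s → μΦ s = ⊥ := fun s hs =>
    le_bot_iff.1 <| by
      simpa [hs] using hμΦleast _ (hΦ'.restrict_isFixedPt hΨ hμΦfix hμΨfix hsupp hgrc) s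
  intro s
  by_cases hs : μΨ s
  · simp [hs, (hgrc s).resolve_left (hsupp s hs)]
  · simp [hs, hbot s hs]
end
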